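/- arXiv:math/0604586 — 10 statements merged into one kernel-verified Lean document; each statement's English description precedes it below -/
import Mathlib

section
/- Let A be a Henselian local ring with commutative residue field k. Suppose f(x) = xⁿ + a_{n-1}x^{n-1} + ⋯ + a₁x + a₀ ∈ A[x] is a monic polynomial such that the reduction f̄ ∈ k[x] has a simple root r ∈ k. Then f has a unique (right) root a ∈ A with ā = r. -/
open Polynomial

lemma exists_right_factor_X_sub_C {A : Type*} [Ring A] (p : A[X]) (a : A) :
    ∃ g : A[X], p = g * (X - C a) + C (p.eval a) := by
  induction p using Polynomial.induction_on' with
  | add p q hp hq =>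
    obtain ⟨gp, hgp⟩ := hp
    obtain ⟨gq, hgq⟩ := hq
    refine ⟨gp + gq, ?_⟩
    rw [eval_add, C_add]
    nth_rewrite 1 [hgp, hgq]
    noncomm_ring
  | monomial n b =>
    refine ⟨C b * (∑ i ∈ Finset.range n, X ^ i * (C a) ^ (n - 1 - i)), ?_⟩
    have hc : (∑ i ∈ Finset.range n, X ^ i * (C a) ^ (n - 1 - i)) * (X - C a)
        = X ^ n - (C a) ^ n := (commute_X (C a)).geom_sum₂_mul n
    rw [eval_monomial, mul_assoc, hc, mul_sub, ← C_pow, ← C_mul, sub_add_cancel,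
      C_mul_X_pow_eq_monomial]

/-- Let `A` be a (possibly non-commutative) local ring with commutative residue field `K`,
encoded by a surjective ring homomorphism `π : A → K` whose kernel is exactly the set of
non-units of `A`.  Assume `A` is Henselian: for every monic `f ∈ A[x]` whose reduction factors
as `f̄ = f₁ * f₂` with `f₁, f₂ ∈ K[x]` monic and relatively prime, there is a unique pair of
monic polynomials `F₁, F₂ ∈ A[x]` with `f = F₁ * F₂` and `F̄ᵢ = fᵢ`.  If `f ∈ A[x]` is a monic
polynomial whose reduction `f̄ ∈ K[x]` has a simple root `r ∈ K` (i.e. of root multiplicity one),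
then `f` has a unique (right) root `a ∈ A` (i.e. `f(a) = ∑ i, f.coeff i * a ^ i = 0`, which is
`Polynomial.eval a f = 0`) such that `ā = r`. -/
theorem henselian_lift_simple_root
    {A : Type*} [Ring A] {K : Type*} [Field K]
    (π : A →+* K) (hπsurj : Function.Surjective π)
    (hπker : ∀ a : A, π a = 0 ↔ ¬ IsUnit a)
    -- `A` is Henselian
    (hHensel : ∀ f : A[X], f.Monic → ∀ f₁ f₂ : K[X], f₁.Monic → f₂.Monic →
      IsCoprime f₁ f₂ → f.map π = f₁ * f₂ →
        ∃! F : A[X] × A[X], F.1.Monic ∧ F.2.Monic ∧ f = F.1 * F.2 ∧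
          F.1.map π = f₁ ∧ F.2.map π = f₂)
    (f : A[X]) (hf : f.Monic) (r : K)
    (hr : rootMultiplicity r (f.map π) = 1) :
    ∃! a : A, π a = r ∧ f.eval a = 0 := by
  have hgmonic : (f.map π).Monic := hf.map π
  obtain ⟨q, hq, hnd⟩ :=
    (f.map π).exists_eq_pow_rootMultiplicity_mul_and_not_dvd hgmonic.ne_zero r
  rw [hr, pow_one] at hq
  have hqmonic : q.Monic := (monic_X_sub_C r).of_mul_monic_left (hq ▸ hgmonic)
  have hcop : IsCoprime q (X - C r) :=
    (((irreducible_X_sub_C r).coprime_iff_not_dvd).2 hnd).symm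
  obtain ⟨F, ⟨hF1m, hF2m, hFeq, hF1map, hF2map⟩, hFuniq⟩ :=
    hHensel f hf q (X - C r) hqmonic (monic_X_sub_C r) hcop (by rw [hq, mul_comm])
  -- F.2 = X - C a for a := -F.2.coeff 0
  have hdeg : F.2.natDegree = 1 := by
    have := hF2m.degree_map π
    rw [hF2map, degree_X_sub_C] at this
    exact natDegree_eq_of_degree_eq_some this.symm
  have hF2eq : F.2 = X - C (-(F.2.coeff 0)) := by
    rw [map_neg, sub_neg_eq_add]
    exact hF2m.eq_X_add_C hdeg
  set a : A := -(F.2.coeff 0) with ha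
  have hπa : π a = r := by
    have h0 := congrArg (fun p : K[X] => p.coeff 0) hF2map
    simp only [coeff_map, coeff_sub, coeff_X_zero, coeff_C_zero, zero_sub] at h0
    rw [ha, map_neg, h0, neg_neg]
  refine ⟨a, ⟨hπa, ?_⟩, ?_⟩
  · rw [hFeq, hF2eq, eval_mul_X_sub_C]
  · rintro b ⟨hb1, hb2⟩
    obtain ⟨G, hG⟩ := exists_right_factor_X_sub_C f b
    rw [hb2, C_0, add_zero] at hG
    have hGmonic : G.Monic := (monic_X_sub_C b).of_mul_monic_right (hG ▸ hf)
    have hXbmap : (X - C b).map π = X - C r := by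
      rw [Polynomial.map_sub, map_X, map_C, hb1]
    have hGmap : G.map π = q := by
      have h1 : (G * (X - C b)).map π = q * (X - C r) := by
        rw [← hG, hq, mul_comm]
      rw [Polynomial.map_mul, hXbmap] at h1
      exact mul_right_cancel₀ (X_sub_C_ne_zero r) h1
    have hFs := hFuniq (G, X - C b) ⟨hGmonic, monic_X_sub_C b, hG, hGmap, hXbmap⟩
    have h2 : X - C b = F.2 := congrArg Prod.snd hFs
    rw [hF2eq] at h2
    have h3 := congrArg (fun p : A[X] => p.coeff 0) h2
    simp only [coeff_sub, coeff_X_zero, coeff_C_zero, zero_sub, neg_inj] at h3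
    exact h3
end

section
/- Let A be a local ring with maximal ideal m and residue field k = A/m, and let M be a left A[x]-module which is finitely generated as an A-module. Then M is a local A[x]-module (has a unique maximal A[x]-submodule) if and only if M/mM is a local k[x]-module. -/
/-!
Reduction modulo `m` identifies the `A[X]`-submodules of `M` containing `mM` with the
`K[X]`-submodules of `M/mM`, and every maximal `A[X]`-submodule `P` contains `mM`: otherwise
`P + mM = M`, and since `m` is the Jacobson radical of `A` and `M` is finitely generated over `A`,
Nakayama's lemma forces `P = M`. Hence the maximal submodules on both sides correspond.
-/

open Polynomial

theorem Ring.le_jacobson_of_forall_mem_iff_not_isUnit {R : Type*} [Ring R] {I : Ideal R}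
    (hI : ∀ a, a ∈ I ↔ ¬IsUnit a) : I ≤ Ring.jacobson R := by
  rw [Ring.jacobson_eq_sInf_isMaximal]
  refine le_sInf fun m (hm : m.IsMaximal) => (hm.eq_of_le ?_ ?_).ge
  · exact fun h => (hI 1).1 (h ▸ Submodule.mem_top) isUnit_one
  · exact fun a ha => (hI a).2 fun hu => hm.ne_top (Ideal.eq_top_of_isUnit_mem _ ha hu)

namespace Submodule

variable {R M : Type*} [Ring R] [AddCommGroup M] [Module R M]

theorem eq_top_of_sup_jacobson_smul_top_eq_top [Module.Finite R M] {N : Submodule R M}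
    (h : N ⊔ Ring.jacobson R • ⊤ = ⊤) : N = ⊤ := by
  by_contra hN
  obtain ⟨P, hP, hNP⟩ := (eq_top_or_exists_le_coatom N).resolve_left hN
  have hJP : Ring.jacobson R • ⊤ ≤ P := (Ring.jacobson_smul_top_le R M).trans (sInf_le hP)
  exact hP.1 (top_le_iff.1 (h ▸ sup_le hNP hJP))

theorem le_jacobson_of_restrictScalars_le_jacobson_smul {S : Type*} [Ring S] [Module S M]
    [SMul R S] [IsScalarTower R S M] [Module.Finite R M] {N : Submodule S M}
    (hN : N.restrictScalars R ≤ Ring.jacobson R • ⊤) : N ≤ Module.jacobson S M := by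
  refine le_sInf fun P (hP : IsCoatom P) => ?_
  by_contra hNP
  have hPN : P ⊔ N = ⊤ := hP.2 _ (left_lt_sup.2 hNP)
  refine hP.1 ((restrictScalars_eq_top_iff R S M).1 (eq_top_of_sup_jacobson_smul_top_eq_top ?_))
  refine top_unique (Eq.trans_le ?_ (sup_le_sup_left hN _))
  rw [← restrictScalars_sup, hPN, restrictScalars_top]

theorem existsUnique_isCoatom_iff_of_surjective {R₂ M₂ : Type*} [Ring R₂] [AddCommGroup M₂]
    [Module R₂ M₂] {τ : R →+* R₂} [RingHomSurjective τ] {f : M →ₛₗ[τ] M₂}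
    (hf : Function.Surjective f) (hker : LinearMap.ker f ≤ Module.jacobson R M) :
    (∃! p : Submodule R M, IsCoatom p) ↔ ∃! p : Submodule R₂ M₂, IsCoatom p := by
  have hker_le {p : Submodule R M} (hp : IsCoatom p) : LinearMap.ker f ≤ p :=
    hker.trans (sInf_le hp)
  constructor
  · rintro ⟨p, hp, huniq⟩
    refine ⟨p.map f, isCoatom_map_of_ker_le hf (hker_le hp) hp, fun p' hp' => ?_⟩
    rw [← map_comap_eq_of_surjective hf p', huniq _ ((isCoatom_comap_iff hf).2 hp')]
  · rintro ⟨p, hp, huniq⟩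
    refine ⟨p.comap f, (isCoatom_comap_iff hf).2 hp, fun p' hp' => ?_⟩
    rw [← comap_map_eq_self (hker_le hp'), huniq _ (isCoatom_map_of_ker_le hf (hker_le hp') hp')]

end Submodule

/-- Let `A` be a (possibly non-commutative) local ring with maximal ideal `m` (the two-sided
ideal of non-units) and residue (skew) field `K = A/m`, encoded by a surjective ring
homomorphism `π : A → K` whose kernel is exactly the set of non-units.  Let `M` be a left
`A[x]`-module, finitely generated over `A` (acting via the constants `C a ∈ A[x]`), and let
`Mbar` be its reduction `M/mM`: a `K[x]`-module together with a surjective additive map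
`q : M → Mbar` which is semilinear with respect to the reduction `A[x] → K[x]` and whose kernel
is exactly `mM` (the additive group generated by the elements `a • u` with `a` a non-unit of
`A`).  Then `M` is a local `A[x]`-module (it has a unique maximal `A[x]`-submodule, i.e. a
unique coatom in its submodule lattice) if and only if `M/mM` is a local `K[x]`-module. -/
theorem local_module_iff_reduction_local
    {A : Type*} [Ring A] {K : Type*} [DivisionRing K]
    (π : A →+* K) (hπsurj : Function.Surjective π)
    (hπker : ∀ a : A, π a = 0 ↔ ¬ IsUnit a)
    {M : Type*} [AddCommGroup M] [Module A[X] M]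
    {Mbar : Type*} [AddCommGroup Mbar] [Module K[X] Mbar]
    (q : M →+ Mbar) (hqsurj : Function.Surjective q)
    (hqsemi : ∀ (p : A[X]) (v : M), q (p • v) = (p.map π) • q v)
    (hqker : ∀ v : M, q v = 0 ↔
      v ∈ AddSubgroup.closure {w : M | ∃ a : A, ¬ IsUnit a ∧ ∃ u : M, w = (C a : A[X]) • u})
    -- `M` is finitely generated as an `A`-module
    (hfin : ∃ s : Finset M, ∀ v : M,
      v ∈ AddSubgroup.closure {w : M | ∃ a : A, ∃ u ∈ s, w = (C a : A[X]) • u}) :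
    (∃! P : Submodule A[X] M, IsCoatom P) ↔ (∃! Q : Submodule K[X] Mbar, IsCoatom Q) := by
  let : Module A M := Module.compHom M (C : A →+* A[X])
  have : IsScalarTower A A[X] M := ⟨fun a p v => by rw [smul_eq_C_mul, mul_smul]; rfl⟩
  have : RingHomSurjective (mapRingHom π) := ⟨map_surjective π hπsurj⟩
  let qₗ : M →ₛₗ[mapRingHom π] Mbar := { q with map_smul' := hqsemi }
  have hm : RingHom.ker π ≤ Ring.jacobson A :=
    Ring.le_jacobson_of_forall_mem_iff_not_isUnit fun a => RingHom.mem_ker.trans (hπker a)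
  obtain ⟨s, hs⟩ := hfin
  have : Module.Finite A M := by
    refine ⟨⟨s, Submodule.eq_top_iff'.2 fun v => ?_⟩⟩
    refine (AddSubgroup.closure_le (Submodule.span A (s : Set M)).toAddSubgroup).2 ?_ (hs v)
    rintro _ ⟨a, u, hu, rfl⟩
    exact Submodule.smul_mem _ a (Submodule.subset_span hu)
  refine Submodule.existsUnique_isCoatom_iff_of_surjective (f := qₗ) hqsurj
    (Submodule.le_jacobson_of_restrictScalars_le_jacobson_smul (R := A) fun v hv => ?_)
  refine (AddSubgroup.closure_le (Ring.jacobson A • ⊤ : Submodule A M).toAddSubgroup).2 ?_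
    ((hqker v).1 hv)
  rintro _ ⟨a, ha, u, rfl⟩
  exact Submodule.smul_mem_smul (hm ((hπker a).2 ha)) Submodule.mem_top
end

section
/- Let A be a local ring with maximal ideal m and residue field k = A/m, let M and N be finitely generated left A-modules, let α : M → N be an A-module homomorphism, and let ᾱ : M/mM → N/mN be the induced k-linear map. If ker(ᾱ) ≠ 0 and ᾱ is surjective, then ker(α) ≠ 0. -/
/-- Noncommutative Nakayama-type lemma: if `I` is a two-sided-ish ideal all of whose
elements `a` have `1 - a` invertible, and `⊤ ≤ P ⊔ I • span s` for a finite set `s`,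
then `P = ⊤`. -/
theorem nakayama_aux' {A M : Type*} [Ring A] [AddCommGroup M] [Module A M]
    (I : Ideal A) (hI2 : ∀ a ∈ I, ∀ b : A, a * b ∈ I)
    (hu : ∀ a ∈ I, IsUnit (1 - a)) (P : Submodule A M) :
    ∀ s : Finset M, (⊤ : Submodule A M) ≤ P ⊔ I • Submodule.span A (s : Set M) → P = ⊤ := by
  classical
  intro s
  induction s using Finset.induction_on with
  | empty =>
    intro h
    simpa [Submodule.span_empty, Submodule.smul_bot] using (top_le_iff.mp h)
  | @insert x s hx ih =>
    intro h
    rw [Finset.coe_insert, Submodule.span_insert, Submodule.smul_sup] at h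
    set Q : Submodule A M := P ⊔ I • Submodule.span A (s : Set M) with hQ
    -- first, x ∈ Q
    have hxmem : x ∈ Q := by
      have hx' : x ∈ P ⊔ (I • Submodule.span A {x} ⊔ I • Submodule.span A (s : Set M)) :=
        h Submodule.mem_top
      rw [← sup_assoc] at hx'
      obtain ⟨y, hy, w, hw, hyw⟩ := Submodule.mem_sup.mp hx'
      obtain ⟨p, hp, u, hu', hpu⟩ := Submodule.mem_sup.mp hy
      -- u = a • x for some a ∈ I
      have hform : ∃ a ∈ I, u = a • x := by
        refine Submodule.smul_induction_on hu' ?_ ?_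
        · intro r hr n hn
          obtain ⟨c, hc⟩ := Submodule.mem_span_singleton.mp hn
          exact ⟨r * c, hI2 r hr c, by rw [mul_smul, hc]⟩
        · rintro m1 m2 ⟨a1, ha1, rfl⟩ ⟨a2, ha2, rfl⟩
          exact ⟨a1 + a2, I.add_mem ha1 ha2, (add_smul a1 a2 x).symm⟩
      obtain ⟨a, haI, rfl⟩ := hform
      have hx2 : x = p + a • x + w := by rw [hpu, hyw]
      have hsub : (1 - a) • x ∈ Q := by
        have heq : (1 - a) • x = p + w := by
          rw [sub_smul, one_smul]
          nth_rewrite 1 [hx2]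
          abel
        rw [heq]
        exact Q.add_mem (Submodule.mem_sup_left hp) (Submodule.mem_sup_right hw)
      obtain ⟨v, hv⟩ := hu a haI
      have : x = (↑v⁻¹ : A) • ((1 - a) • x) := by
        rw [← hv, ← mul_smul, Units.inv_mul, one_smul]
      rw [this]
      exact Q.smul_mem _ hsub
    -- now ⊤ ≤ Q
    apply ih
    intro n _
    have hn' : n ∈ P ⊔ (I • Submodule.span A {x} ⊔ I • Submodule.span A (s : Set M)) :=
      h Submodule.mem_top
    have hsing : I • Submodule.span A ({x} : Set M) ≤ Q := by
      refine Submodule.smul_le.mpr fun r _ m hm => ?_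
      obtain ⟨c, hc⟩ := Submodule.mem_span_singleton.mp hm
      rw [← hc, ← mul_smul]
      exact Q.smul_mem _ hxmem
    have : P ⊔ (I • Submodule.span A ({x} : Set M) ⊔ I • Submodule.span A (s : Set M)) ≤ Q :=
      sup_le (le_sup_left) (sup_le hsing le_sup_right)
    exact this hn'

/-- Let `A` be a (possibly non-commutative) local ring with maximal ideal `m` (the two-sided
ideal of non-units) and residue skew field `K = A/m`, encoded by a surjective ring homomorphism
`π : A → K` whose kernel is exactly the set of non-units.  Let `M`, `N` be finitely generated
left `A`-modules, with reductions `M̄ = M/mM` and `N̄ = N/mN` given as `K`-modules `Mbar`, `Nbar`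
together with surjective additive maps `qM : M → Mbar`, `qN : N → Nbar` which are `π`-semilinear
and whose kernels are exactly `mM` and `mN`.  Let `α : M → N` be an `A`-module homomorphism and
`ᾱ : M̄ → N̄` the induced `K`-linear map (i.e. `qN ∘ α = ᾱ ∘ qM`).  If `ker ᾱ ≠ 0` and `ᾱ` is
surjective, then `ker α ≠ 0`. -/
theorem ker_ne_bot_of_reduction
    {A : Type*} [Ring A] {K : Type*} [DivisionRing K]
    (π : A →+* K) (hπsurj : Function.Surjective π)
    (hπker : ∀ a : A, π a = 0 ↔ ¬ IsUnit a)
    {M N : Type*} [AddCommGroup M] [Module A M] [AddCommGroup N] [Module A N]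
    [Module.Finite A M] [Module.Finite A N]
    {Mbar Nbar : Type*} [AddCommGroup Mbar] [Module K Mbar]
    [AddCommGroup Nbar] [Module K Nbar]
    (qM : M →+ Mbar) (hqMsurj : Function.Surjective qM)
    (hqMsemi : ∀ (a : A) (v : M), qM (a • v) = π a • qM v)
    (hqMker : ∀ v : M, qM v = 0 ↔
      v ∈ AddSubgroup.closure {w : M | ∃ a : A, ¬ IsUnit a ∧ ∃ u : M, w = a • u})
    (qN : N →+ Nbar) (hqNsurj : Function.Surjective qN)
    (hqNsemi : ∀ (a : A) (v : N), qN (a • v) = π a • qN v)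
    (hqNker : ∀ v : N, qN v = 0 ↔
      v ∈ AddSubgroup.closure {w : N | ∃ a : A, ¬ IsUnit a ∧ ∃ u : N, w = a • u})
    (α : M →ₗ[A] N) (αbar : Mbar →ₗ[K] Nbar)
    (hcomm : ∀ v : M, qN (α v) = αbar (qM v))
    (hkerbar : LinearMap.ker αbar ≠ ⊥) (hsurjbar : Function.Surjective αbar) :
    LinearMap.ker α ≠ ⊥ := by
  intro hker
  have hinj : Function.Injective α := LinearMap.ker_eq_bot.mp hker
  set I : Ideal A := RingHom.ker π with hI
  have hmemI : ∀ a : A, a ∈ I ↔ ¬ IsUnit a := fun a => by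
    rw [hI, RingHom.mem_ker, hπker]
  have hI2 : ∀ a ∈ I, ∀ b : A, a * b ∈ I := by
    intro a ha b
    rw [hI, RingHom.mem_ker] at ha ⊢
    rw [map_mul, ha, zero_mul]
  have hu : ∀ a ∈ I, IsUnit (1 - a) := by
    intro a ha
    by_contra h1
    have hpa : π a = 0 := (hπker a).mpr ((hmemI a).mp ha)
    have h2 : π (1 - a) = 0 := (hπker _).mpr h1
    rw [map_sub, map_one, hpa, sub_zero] at h2
    exact one_ne_zero h2
  -- elements with qN v = 0 lie in I • ⊤
  have hclos : ∀ v : N, qN v = 0 → v ∈ I • (⊤ : Submodule A N) := by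
    intro v hv
    have hv' := (hqNker v).mp hv
    have hle : AddSubgroup.closure {w : N | ∃ a : A, ¬ IsUnit a ∧ ∃ u : N, w = a • u}
        ≤ (I • (⊤ : Submodule A N)).toAddSubgroup := by
      apply AddSubgroup.closure_le _ |>.mpr
      rintro w ⟨a, ha, u, rfl⟩
      exact Submodule.smul_mem_smul ((hmemI a).mpr ha) Submodule.mem_top
    exact hle hv'
  -- α is surjective by Nakayama
  have hsurj : Function.Surjective α := by
    have htop : (⊤ : Submodule A N) ≤ LinearMap.range α ⊔ I • (⊤ : Submodule A N) := by
      intro n _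
      obtain ⟨mb, hmb⟩ := hsurjbar (qN n)
      obtain ⟨m, rfl⟩ := hqMsurj mb
      have h0 : qN (n - α m) = 0 := by
        rw [map_sub, hcomm, hmb, sub_self]
      have : n = α m + (n - α m) := by abel
      rw [this]
      exact Submodule.add_mem _ (Submodule.mem_sup_left ⟨m, rfl⟩)
        (Submodule.mem_sup_right (hclos _ h0))
    obtain ⟨s, hs⟩ := (Module.Finite.fg_top : (⊤ : Submodule A N).FG)
    have hrange : LinearMap.range α = ⊤ := by
      apply nakayama_aux' I hI2 hu _ s
      rw [hs]
      exact htop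
    exact LinearMap.range_eq_top.mp hrange
  -- get a nonzero element of ker αbar and lift it
  obtain ⟨xb, hxbmem, hxbne⟩ := Submodule.ne_bot_iff _ |>.mp hkerbar
  obtain ⟨x, rfl⟩ := hqMsurj xb
  have h0 : qN (α x) = 0 := by
    rw [hcomm]
    exact LinearMap.mem_ker.mp hxbmem
  -- the closure in N is the image of the closure in M
  have himg : (α : M → N) '' {w : M | ∃ a : A, ¬ IsUnit a ∧ ∃ u : M, w = a • u}
      = {w : N | ∃ a : A, ¬ IsUnit a ∧ ∃ u : N, w = a • u} := by
    ext w
    constructor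
    · rintro ⟨v, ⟨a, ha, u, rfl⟩, rfl⟩
      exact ⟨a, ha, α u, by rw [map_smul]⟩
    · rintro ⟨a, ha, u, rfl⟩
      obtain ⟨v, rfl⟩ := hsurj u
      exact ⟨a • v, ⟨a, ha, v, rfl⟩, by rw [map_smul]⟩
  have hmap := AddMonoidHom.map_closure α.toAddMonoidHom
    {w : M | ∃ a : A, ¬ IsUnit a ∧ ∃ u : M, w = a • u}
  have hcoe : (α.toAddMonoidHom : M → N) = (α : M → N) := rfl
  rw [hcoe, himg] at hmap
  have hmem : α x ∈ (AddSubgroup.closure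
      {w : M | ∃ a : A, ¬ IsUnit a ∧ ∃ u : M, w = a • u}).map α.toAddMonoidHom := by
    rw [hmap]
    exact (hqNker _).mp h0
  obtain ⟨y, hy, hyx⟩ := hmem
  have : x = y := hinj (hyx.symm)
  apply hxbne
  rw [← this] at hy
  exact (hqMker x).mpr hy
end

section
/- Let A be a local ring whose residue field k is commutative. Suppose p, q ∈ A[x] are polynomials of degrees r and s respectively, with p monic, and suppose A[x]p + A[x]q = A[x] (as left ideals). Then there exist polynomials p₁, q₁ ∈ A[x] such that deg(p₁) = deg(q), deg(q₁) = deg(p), p₁p = q₁q, and q₁ is monic. -/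
/-!
Let `r = deg p`. Since `p` is monic, right division by `p` shows that `M = A[X] ⧸ A[X]p` is a left
`A`-module spanned by the classes of `1, X, …, X^(r-1)`. It suffices to find `g` of degree `< r`
with `X^r q + g q ∈ A[X]p`, i.e. to show that the classes of `g q`, `deg g < r`, exhaust `M`. The
kernel of the residue map lies in the Jacobson radical, so by Nakayama's lemma this may be checked
modulo it. There it holds because `p̄` and `q̄` are coprime in the commutative ring `k[X]`: every
`F` can be written as `G q̄ + H p̄` with `deg G < r`, and `G`, `H` lift to `A[X]` without raising
the degree of `G`. Comparing degrees in `p₁ p = q₁ q` then gives `deg p₁ = deg q`.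
-/

open Polynomial

theorem Submodule.eq_top_of_sup_jacobson_smul_eq_top {R M : Type*} [Ring R] [AddCommGroup M]
    [Module R M] [Module.Finite R M] {N : Submodule R M}
    (h : N ⊔ Ring.jacobson R • ⊤ = ⊤) : N = ⊤ := by
  have htop : (⊤ : Submodule R (M ⧸ N)) = ⊥ := by
    refine Submodule.FG.eq_bot_of_le_jacobson_smul Module.Finite.fg_top ?_
    calc ⊤ = map N.mkQ (Ring.jacobson R • ⊤) := ((map_mkQ_eq_top N _).2 h).symm
      _ = Ring.jacobson R • map N.mkQ ⊤ := map_smul'' _ _ _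
      _ ≤ Ring.jacobson R • ⊤ := smul_mono_right _ le_top
  rw [← Submodule.Quotient.subsingleton_iff, ← Submodule.subsingleton_iff R]
  exact subsingleton_of_bot_eq_top htop.symm

theorem RingHom.ker_le_jacobson_of_isLocalHom {R S : Type*} [Ring R] [Semiring S] (f : R →+* S)
    [IsLocalHom f] : RingHom.ker f ≤ Ring.jacobson R := by
  intro x hx
  rw [← Ideal.jacobson_bot, Ideal.mem_jacobson_iff]
  intro y
  have hunit : IsUnit (y * x + 1) :=
    isUnit_of_map_unit f _ (by simp [RingHom.mem_ker.1 hx])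
  obtain ⟨z, hz⟩ := hunit.exists_left_inv
  exact ⟨z, by rw [Ideal.mem_bot, mul_assoc, ← mul_add_one, hz, sub_self]⟩

namespace Polynomial

theorem Monic.exists_degree_lt_mul_add_mul_eq {R : Type*} [CommRing R] [Nontrivial R]
    {P Q : R[X]} (hP : P.Monic) (hPQ : IsCoprime P Q) (F : R[X]) :
    ∃ G H : R[X], G.degree < P.degree ∧ G * Q + H * P = F := by
  obtain ⟨U, V, hUV⟩ := hPQ
  refine ⟨(F * V) %ₘ P, F * U + (F * V) /ₘ P * Q, degree_modByMonic_lt _ hP, ?_⟩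
  linear_combination Q * modByMonic_add_div (F * V) P + F * hUV

theorem degree_opRingEquiv {R : Type*} [Semiring R] (f : R[X]ᵐᵒᵖ) :
    (opRingEquiv R f).degree = (MulOpposite.unop f).degree := by
  rw [degree, support_opRingEquiv, degree]

section

variable {A : Type*} [Ring A]

/-- `modByMonic` divides on the left, so right division is done in the opposite ring. -/
theorem Monic.exists_mul_add_eq [Nontrivial A] {p : A[X]} (hp : p.Monic) (f : A[X]) :
    ∃ g ρ : A[X], ρ.degree < p.degree ∧ g * p + ρ = f := by
  set φ := opRingEquiv A
  have hmonic : (φ (.op p)).Monic := by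
    simp [φ, Monic, leadingCoeff_opRingEquiv, hp.leadingCoeff]
  refine ⟨(φ.symm (φ (.op f) /ₘ φ (.op p))).unop, (φ.symm (φ (.op f) %ₘ φ (.op p))).unop, ?_, ?_⟩
  · rw [← degree_opRingEquiv, RingEquiv.apply_symm_apply, ← MulOpposite.unop_op p,
      ← degree_opRingEquiv]
    exact degree_modByMonic_lt _ hmonic
  · apply MulOpposite.op_injective
    apply φ.injective
    simp only [MulOpposite.op_add, MulOpposite.op_mul, MulOpposite.op_unop, map_add, map_mul,
      RingEquiv.apply_symm_apply]
    rw [add_comm, modByMonic_add_div]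

theorem mem_smul_top_of_coeff_mem {I : Ideal A} {e : A[X]} (he : ∀ n, e.coeff n ∈ I) :
    e ∈ I • (⊤ : Submodule A A[X]) := by
  rw [e.as_sum_support]
  refine Submodule.sum_mem _ fun n _ => ?_
  rw [← C_mul_X_pow_eq_monomial, ← smul_eq_C_mul]
  exact Submodule.smul_mem_smul (he n) Submodule.mem_top

theorem Monic.finite_quotient_span_singleton [Nontrivial A] {p : A[X]} (hp : p.Monic) :
    Module.Finite A (A[X] ⧸ Ideal.span {p}) := by
  refine Module.Finite.of_surjective
    (((Ideal.span {p}).mkQ.restrictScalars A).comp (degreeLT A p.natDegree).subtype) ?_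
  intro m
  induction m using Submodule.Quotient.induction_on with | _ f => ?_
  obtain ⟨g, ρ, hρ, rfl⟩ := hp.exists_mul_add_eq f
  refine ⟨⟨ρ, mem_degreeLT.2 (degree_eq_natDegree hp.ne_zero ▸ hρ)⟩, ?_⟩
  simp only [LinearMap.coe_comp, Function.comp_apply, Submodule.coe_subtype,
    LinearMap.coe_restrictScalars, Submodule.mkQ_apply, Submodule.Quotient.eq]
  simpa using Ideal.mul_mem_left _ (-g) (Ideal.mem_span_singleton_self p)

variable {K : Type*} [CommRing K] [Nontrivial K]

theorem Monic.exists_degree_lt_map_sub_eq_zero {π : A →+* K} (hπsurj : Function.Surjective π)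
    {p q : A[X]} (hp : p.Monic) (hcop : IsCoprime (p.map π) (q.map π)) (f : A[X]) :
    ∃ g h : A[X], g.degree < p.degree ∧ (f - (g * q + h * p)).map π = 0 := by
  obtain ⟨G, H, hG, hGH⟩ := (hp.map π).exists_degree_lt_mul_add_mul_eq hcop (f.map π)
  obtain ⟨g, rfl, hg⟩ := exists_degree_eq_of_mem_lifts (mem_lifts_of_surjective hπsurj G)
  obtain ⟨h, rfl⟩ := map_surjective π hπsurj H
  refine ⟨g, h, ?_, ?_⟩
  · rwa [← hg, hp.degree_map] at hG
  · simp [Polynomial.map_sub, Polynomial.map_add, Polynomial.map_mul, hGH]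

theorem Monic.map_degreeLT_sup_jacobson_smul_eq_top {π : A →+* K}
    (hπsurj : Function.Surjective π) (hker : RingHom.ker π ≤ Ring.jacobson A) {p q : A[X]}
    (hp : p.Monic) (hcop : IsCoprime (p.map π) (q.map π)) :
    (degreeLT A p.natDegree).map
        ((Ideal.span {p}).mkQ.restrictScalars A ∘ₗ LinearMap.mulRight A q) ⊔
      Ring.jacobson A • ⊤ = ⊤ := by
  have : Nontrivial A := π.domain_nontrivial
  set L : A[X] →ₗ[A] A[X] ⧸ Ideal.span {p} := (Ideal.span {p}).mkQ.restrictScalars A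
  refine eq_top_iff.2 fun m _ => ?_
  obtain ⟨f, rfl⟩ : ∃ f, L f = m := Submodule.mkQ_surjective _ m
  obtain ⟨g, h, hg, he⟩ := hp.exists_degree_lt_map_sub_eq_zero hπsurj hcop f
  have hsplit : L f = L (g * q) + L (f - (g * q + h * p)) := by
    rw [← map_add]
    refine (Submodule.Quotient.eq _).2 ?_
    rw [show f - (g * q + (f - (g * q + h * p))) = h * p by abel]
    exact Ideal.mul_mem_left _ h (Ideal.mem_span_singleton_self p)
  have he' : f - (g * q + h * p) ∈ Ring.jacobson A • (⊤ : Submodule A A[X]) :=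
    mem_smul_top_of_coeff_mem fun n => hker <| by rw [RingHom.mem_ker, ← coeff_map, he, coeff_zero]
  rw [hsplit]
  refine add_mem (Submodule.mem_sup_left ⟨g, ?_, rfl⟩) (Submodule.mem_sup_right ?_)
  · exact mem_degreeLT.2 (degree_eq_natDegree hp.ne_zero ▸ hg)
  · have := Submodule.mem_map_of_mem (f := L) he'
    rw [Submodule.map_smul''] at this
    exact Submodule.smul_mono le_rfl le_top this

theorem Monic.exists_monic_mul_mem_span_singleton (π : A →+* K)
    (hπsurj : Function.Surjective π) (hker : RingHom.ker π ≤ Ring.jacobson A) {p q : A[X]}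
    (hp : p.Monic) (hcop : IsCoprime (p.map π) (q.map π)) :
    ∃ q₁ : A[X], q₁.Monic ∧ q₁.degree = p.degree ∧ q₁ * q ∈ Ideal.span {p} := by
  have : Nontrivial A := π.domain_nontrivial
  have := hp.finite_quotient_span_singleton
  have hN := Submodule.eq_top_of_sup_jacobson_smul_eq_top
    (hp.map_degreeLT_sup_jacobson_smul_eq_top hπsurj hker hcop)
  obtain ⟨g, hg, hgq⟩ := Submodule.eq_top_iff'.1 hN ((Ideal.span {p}).mkQ (-(X ^ p.natDegree * q)))
  have hg' : g.degree < p.natDegree := mem_degreeLT.1 hg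
  refine ⟨X ^ p.natDegree + g, monic_X_pow_add hg', ?_, ?_⟩
  · rw [degree_add_eq_left_of_degree_lt (by rwa [degree_X_pow]), degree_X_pow,
      degree_eq_natDegree hp.ne_zero]
  · have := (Submodule.Quotient.eq _).1 hgq
    rwa [LinearMap.mulRight_apply, sub_neg_eq_add, add_comm, ← add_mul] at this

end

end Polynomial

theorem exists_ore_like_relation_general
    {A : Type*} [Ring A] {K : Type*} [Field K]
    (π : A →+* K) (hπsurj : Function.Surjective π)
    (hπker : ∀ a : A, π a = 0 ↔ ¬ IsUnit a)
    (p q : A[X])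
    (hp : p.Monic)
    (hspan : Ideal.span {p} ⊔ Ideal.span {q} = (⊤ : Ideal A[X])) :
    ∃ p₁ q₁ : A[X], p₁.degree = q.degree ∧ q₁.degree = p.degree ∧
      p₁ * p = q₁ * q ∧ q₁.Monic := by
  have : Nontrivial A := π.domain_nontrivial
  have : IsLocalHom π := ⟨fun a ha => not_not.1 ((hπker a).not.1 ha.ne_zero)⟩
  obtain ⟨_, hu, _, hv, huv⟩ :=
    Submodule.mem_sup.1 (hspan ▸ Submodule.mem_top : (1 : A[X]) ∈ Ideal.span {p} ⊔ Ideal.span {q})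
  obtain ⟨u, rfl⟩ := Ideal.mem_span_singleton'.1 hu
  obtain ⟨v, rfl⟩ := Ideal.mem_span_singleton'.1 hv
  have hcop : IsCoprime (p.map π) (q.map π) :=
    ⟨u.map π, v.map π, by simpa using congrArg (map π) huv⟩
  obtain ⟨q₁, hq₁, hdeg, hmem⟩ := hp.exists_monic_mul_mem_span_singleton π hπsurj
    π.ker_le_jacobson_of_isLocalHom hcop
  obtain ⟨p₁, hp₁⟩ := Ideal.mem_span_singleton'.1 hmem
  refine ⟨p₁, q₁, ?_, hdeg, hp₁, hq₁⟩
  have hsum : p₁.degree + p.degree = q.degree + p.degree := by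
    rw [← hp.degree_mul, hp₁, hq₁.degree_mul_comm, hq₁.degree_mul, hdeg]
  exact WithBot.add_right_cancel (fun h => hp.ne_zero (degree_eq_bot.1 h)) hsum

/-- Let `A` be a (possibly non-commutative) local ring whose residue field `K` is commutative,
encoded by a surjective ring homomorphism `π : A → K` onto a field whose kernel is exactly the
set of non-units of `A`.  Suppose `p, q ∈ A[x]` are polynomials of degrees `r` and `s`
respectively, with `p` monic, and suppose `A[x]p + A[x]q = A[x]` as left ideals (in Mathlib,
`Ideal` over a non-commutative ring means left ideal, and `Ideal.span {p}` is `A[x]p`).  Then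
there exist polynomials `p₁, q₁ ∈ A[x]` with `deg p₁ = deg q`, `deg q₁ = deg p`, `p₁p = q₁q`,
and `q₁` monic. -/
theorem exists_ore_like_relation
    {A : Type*} [Ring A] {K : Type*} [Field K]
    (π : A →+* K) (hπsurj : Function.Surjective π)
    (hπker : ∀ a : A, π a = 0 ↔ ¬ IsUnit a)
    (p q : A[X]) (r s : ℕ)
    (hpdeg : p.degree = (r : WithBot ℕ)) (hqdeg : q.degree = (s : WithBot ℕ))
    (hp : p.Monic)
    (hspan : Ideal.span {p} ⊔ Ideal.span {q} = (⊤ : Ideal A[X])) :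
    ∃ p₁ q₁ : A[X], p₁.degree = q.degree ∧ q₁.degree = p.degree ∧
      p₁ * p = q₁ * q ∧ q₁.Monic :=
  exists_ore_like_relation_general π hπsurj hπker p q hp hspan
end

section
/- Let A be a local ring with maximal ideal m. If p, q ∈ A[x] are polynomials such that p is monic and A[x]p + A[x]q + m[x] = A[x], then A[x]p + A[x]q = A[x]. -/
open Polynomial

/-- Division with remainder by a monic polynomial, with quotient on the left,
preserving a coefficient predicate closed under subtraction and right multiplication. -/
private lemma div_by_monic_pred {A : Type*} [Ring A] [Nontrivial A]
    (p : A[X]) (hp : p.Monic)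
    (P : A → Prop) (Psub : ∀ a b, P a → P b → P (a - b))
    (Pmul : ∀ a b, P a → P (a * b)) :
    ∀ f : A[X], (∀ k, P (f.coeff k)) → ∃ u r : A[X],
      f = u * p + r ∧ r.degree < p.degree ∧ ∀ k, P (r.coeff k) := by
  have main : ∀ d : ℕ, ∀ f : A[X], f.natDegree ≤ d → (∀ k, P (f.coeff k)) →
      ∃ u r : A[X], f = u * p + r ∧ r.degree < p.degree ∧ ∀ k, P (r.coeff k) := by
    intro d
    induction d with
    | zero =>
      intro f hfd hf
      by_cases h : f.degree < p.degree
      · exact ⟨0, f, by simp, h, hf⟩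
      · have hpf : p.degree ≤ f.degree := not_lt.mp h
        have hple : p.natDegree = 0 := by
          have h1 : f.degree ≤ 0 := le_trans (degree_le_natDegree)
            (by exact_mod_cast Nat.cast_le.mpr hfd)
          have h2 : p.degree ≤ 0 := le_trans hpf h1
          exact natDegree_le_iff_degree_le.mpr h2 |>.antisymm (Nat.zero_le _)
        have hp1 : p = 1 := hp.natDegree_eq_zero.mp hple
        refine ⟨f, 0, by simp [hp1], ?_, by
          intro k
          simpa using Psub _ _ (hf 0) (hf 0)⟩
        rw [hp1, degree_one, degree_zero]
        exact WithBot.bot_lt_coe 0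
    | succ d ih =>
      intro f hfd hf
      by_cases h : f.degree < p.degree
      · exact ⟨0, f, by simp, h, hf⟩
      have hpf : p.degree ≤ f.degree := not_lt.mp h
      have hf0 : f ≠ 0 := by
        rintro rfl
        rw [degree_zero, le_bot_iff, degree_eq_bot] at hpf
        exact hp.ne_zero hpf
      have ha : f.leadingCoeff ≠ 0 := leadingCoeff_ne_zero.mpr hf0
      have hnd : p.natDegree ≤ f.natDegree := natDegree_le_natDegree hpf
      set k : ℕ := f.natDegree - p.natDegree with hk
      set g : A[X] := f - C f.leadingCoeff * X ^ k * p with hg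
      have hdq : (C f.leadingCoeff * X ^ k * p).degree = f.degree := by
        rw [hp.degree_mul, degree_C_mul_X_pow k ha, degree_eq_natDegree hf0,
          degree_eq_natDegree hp.ne_zero, ← Nat.cast_add, Nat.sub_add_cancel hnd]
      have hlc : (C f.leadingCoeff * X ^ k * p).leadingCoeff = f.leadingCoeff := by
        rw [leadingCoeff_mul_monic hp, C_mul_X_pow_eq_monomial, leadingCoeff_monomial]
      have hglt : g.degree < f.degree := degree_sub_lt hdq.symm hf0 hlc.symm
      have hgc : ∀ j, P (g.coeff j) := by
        intro j
        rw [hg]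
        rw [coeff_sub, mul_assoc, coeff_C_mul]
        exact Psub _ _ (hf j) (Pmul _ _ (hf f.natDegree))
      have hgd : g.natDegree ≤ d := by
        by_cases hg0 : g = 0
        · simp [hg0]
        · have := natDegree_lt_natDegree hg0 hglt
          omega
      obtain ⟨u, r, e, hrd, hrc⟩ := ih g hgd hgc
      refine ⟨u + C f.leadingCoeff * X ^ k, r, ?_, hrd, hrc⟩
      have e2 : f = g + C f.leadingCoeff * X ^ k * p := by rw [hg]; abel
      conv_lhs => rw [e2, e]
      rw [add_mul]
      abel
  exact fun f hf => main f.natDegree f le_rfl hf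

/-- Nakayama-style elimination: if each `S i` lies in the left ideal `I` modulo an
`A`-linear combination of the `S j` with non-unit coefficients, then each `S i ∈ I`. -/
private lemma nak_aux {A : Type*} [Ring A]
    (hadd : ∀ a b : A, ¬ IsUnit a → ¬ IsUnit b → ¬ IsUnit (a + b))
    (hmul_left : ∀ a r : A, ¬ IsUnit a → ¬ IsUnit (r * a))
    (I : Ideal A[X]) :
    ∀ (n : ℕ) (S : Fin n → A[X]) (a : Fin n → Fin n → A),
      (∀ i j, ¬ IsUnit (a i j)) →
      (∀ i, S i - ∑ j, C (a i j) * S j ∈ I) → ∀ i, S i ∈ I := by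
  intro n
  induction n with
  | zero => exact fun S a _ _ i => i.elim0
  | succ n ih =>
    intro S a ha hrel
    set L := Fin.last n with hL
    have hu : IsUnit (1 - a L L) := by
      by_contra h
      exact hadd _ _ h (ha L L) (by simp)
    obtain ⟨U, hU⟩ := hu
    set t : A := ↑U⁻¹ with htdef
    have ht : t - t * a L L = 1 := by
      have h1 : t * (1 - a L L) = 1 := by rw [← hU]; exact U.inv_mul
      rwa [mul_sub, mul_one] at h1
    set T : A[X] := ∑ j : Fin n, C (t * a L (Fin.castSucc j)) * S (Fin.castSucc j) with hT
    have h1 : S L - (∑ j : Fin n, C (a L (Fin.castSucc j)) * S (Fin.castSucc j)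
        + C (a L L) * S L) ∈ I := by
      have := hrel L
      rwa [Fin.sum_univ_castSucc] at this
    have h2 : S L - T ∈ I := by
      have hm := I.smul_mem (C t) h1
      rw [smul_eq_mul] at hm
      have e : C t * (S L - (∑ j : Fin n, C (a L (Fin.castSucc j)) * S (Fin.castSucc j)
          + C (a L L) * S L)) = S L - T := by
        rw [mul_sub, mul_add, sub_add_eq_sub_sub, sub_right_comm, Finset.mul_sum]
        simp_rw [← mul_assoc, ← C_mul]
        rw [← hT, ← sub_mul, ← C_sub, ht, C_1, one_mul]
      rwa [e] at hm
    set b : Fin n → Fin n → A := fun i j =>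
      a (Fin.castSucc i) (Fin.castSucc j)
        + a (Fin.castSucc i) L * (t * a L (Fin.castSucc j)) with hb
    have hbnu : ∀ i j, ¬ IsUnit (b i j) := fun i j =>
      hadd _ _ (ha _ _) (hmul_left _ _ (hmul_left _ _ (ha L _)))
    have hrel' : ∀ i : Fin n,
        S (Fin.castSucc i) - ∑ j : Fin n, C (b i j) * S (Fin.castSucc j) ∈ I := by
      intro i
      have hr := hrel (Fin.castSucc i)
      rw [Fin.sum_univ_castSucc] at hr
      have hm := I.smul_mem (C (a (Fin.castSucc i) L)) h2
      rw [smul_eq_mul] at hm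
      have e2 : S (Fin.castSucc i) - ∑ j : Fin n, C (b i j) * S (Fin.castSucc j)
          = (S (Fin.castSucc i)
              - (∑ j : Fin n, C (a (Fin.castSucc i) (Fin.castSucc j)) * S (Fin.castSucc j)
                + C (a (Fin.castSucc i) L) * S L))
            + C (a (Fin.castSucc i) L) * (S L - T) := by
        simp only [hb, hT, C_add, C_mul, add_mul, mul_assoc, mul_sub, Finset.mul_sum,
          Finset.sum_add_distrib]
        abel
      rw [e2]
      exact I.add_mem hr hm
    have hcast : ∀ i : Fin n, S (Fin.castSucc i) ∈ I :=
      ih (fun i => S (Fin.castSucc i)) b hbnu hrel'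
    have hSL : S L ∈ I := by
      have hTI : T ∈ I := by
        rw [hT]
        exact Submodule.sum_mem _ (fun j _ => by
          have := I.smul_mem (C (t * a L (Fin.castSucc j))) (hcast j)
          rwa [smul_eq_mul] at this)
      have := I.add_mem h2 hTI
      simpa using this
    intro i
    refine Fin.lastCases ?_ ?_ i
    · exact hSL
    · exact hcast

/-- Let `A` be a (possibly non-commutative) local ring, i.e. the non-invertible elements of `A`
form a two-sided ideal `m = {a | ¬ IsUnit a}` (it contains `0`, is closed under addition and
under multiplication on either side by arbitrary ring elements).  If `p, q ∈ A[x]` are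
polynomials with `p` monic and `A[x]p + A[x]q + m[x] = A[x]` — i.e. every `f ∈ A[x]` can be
written as `f = u*p + v*q + w` with `w` having all coefficients non-units — then
`A[x]p + A[x]q = A[x]`, i.e. every `f ∈ A[x]` can be written as `f = u*p + v*q`. -/
theorem span_add_nonunits_eq_top
    {A : Type*} [Ring A]
    (hzero : ¬ IsUnit (0 : A))
    (hadd : ∀ a b : A, ¬ IsUnit a → ¬ IsUnit b → ¬ IsUnit (a + b))
    (hmul_left : ∀ a r : A, ¬ IsUnit a → ¬ IsUnit (r * a))
    (hmul_right : ∀ a r : A, ¬ IsUnit a → ¬ IsUnit (a * r))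
    (p q : A[X]) (hp : p.Monic)
    (hsum : ∀ f : A[X], ∃ u v w : A[X],
      (∀ n : ℕ, ¬ IsUnit (w.coeff n)) ∧ f = u * p + v * q + w) :
    ∀ f : A[X], ∃ u v : A[X], f = u * p + v * q := by
  have hnt : Nontrivial A := ⟨0, 1, fun h => hzero (h ▸ isUnit_one)⟩
  set I : Ideal A[X] := Ideal.span {p, q} with hI
  have hpI : p ∈ I := Ideal.subset_span (by simp)
  have hqI : q ∈ I := Ideal.subset_span (by simp)
  suffices hone : (1 : A[X]) ∈ I by
    intro f
    have hf : f ∈ I := by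
      have := I.smul_mem f hone
      rwa [smul_eq_mul, mul_one] at this
    obtain ⟨u, v, huv⟩ := Ideal.mem_span_pair.mp hf
    exact ⟨u, v, huv.symm⟩
  by_cases hn0 : p.natDegree = 0
  · have hp1 : p = 1 := hp.natDegree_eq_zero.mp hn0
    rw [← hp1]; exact hpI
  -- reduce each X^i modulo I to a polynomial with non-unit coefficients and degree < deg p
  have Psub : ∀ a b : A, ¬ IsUnit a → ¬ IsUnit b → ¬ IsUnit (a - b) := by
    intro a b ha hb
    have := hmul_left b (-1) hb
    rw [neg_one_mul] at this
    simpa [sub_eq_add_neg] using hadd a (-b) ha this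
  set n := p.natDegree with hn
  have key : ∀ i : Fin n, ∃ r : A[X],
      ((X : A[X]) ^ (i : ℕ) - r ∈ I) ∧ r.degree < p.degree ∧
        ∀ k, ¬ IsUnit (r.coeff k) := by
    intro i
    obtain ⟨u, v, w, hw, hf⟩ := hsum ((X : A[X]) ^ (i : ℕ))
    obtain ⟨u', r, he, hrd, hrc⟩ := div_by_monic_pred p hp (fun a => ¬ IsUnit a)
      Psub (fun a b ha => hmul_right a b ha) w hw
    refine ⟨r, ?_, hrd, hrc⟩
    have : (X : A[X]) ^ (i : ℕ) - r = (u + u') * p + v * q := by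
      rw [hf, he, add_mul]; abel
    rw [this]
    refine I.add_mem ?_ ?_
    · have := I.smul_mem (u + u') hpI; rwa [smul_eq_mul] at this
    · have := I.smul_mem v hqI; rwa [smul_eq_mul] at this
  choose r hrI hrdeg hrcoef using key
  set S : Fin n → A[X] := fun i => (X : A[X]) ^ (i : ℕ) with hS
  set a : Fin n → Fin n → A := fun i j => (r i).coeff j with haa
  have hrel : ∀ i, S i - ∑ j, C (a i j) * S j ∈ I := by
    intro i
    have hre : r i = ∑ j : Fin n, C (a i j) * S j := by
      have hdlt : (r i).natDegree < n := by
        by_cases h0 : r i = 0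
        · rw [h0]; simpa using Nat.pos_of_ne_zero hn0
        · refine (natDegree_lt_iff_degree_lt h0).mpr ?_
          have h1 := hrdeg i
          rwa [degree_eq_natDegree hp.ne_zero, ← hn] at h1
      have hform := as_sum_range' (r i) n hdlt
      rw [hform, ← Fin.sum_univ_eq_sum_range (fun j => monomial j ((r i).coeff j)) n]
      refine Finset.sum_congr rfl (fun j _ => ?_)
      rw [← C_mul_X_pow_eq_monomial]
    rw [← hre]
    exact hrI i
  have hall := nak_aux hadd hmul_left I n S a (fun i j => hrcoef i j) hrel
  have h0 : (0 : ℕ) < n := Nat.pos_of_ne_zero hn0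
  have h1 := hall ⟨0, h0⟩
  simpa [hS] using h1
end

section
/- Let A be a local ring with maximal ideal m and commutative residue field k. Let p ∈ A[x] be monic with p = p₁p₂ = q₂q₁, where p₁, p₂, q₁, q₂ ∈ A[x] are monic and the reductions satisfy p̄₁ = q̄₁ = f₁ and p̄₂ = q̄₂ = f₂ for relatively prime monic polynomials f₁, f₂ ∈ k[x]. Then A[x]p₂ + A[x]q₁ = A[x], A[x]p₂ ∩ A[x]q₁ = A[x]p, and consequently the left A[x]-module A[x]/A[x]p is isomorphic to A[x]/A[x]p₂ ⊕ A[x]/A[x]q₁. -/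
/-!
Over the residue field, coprimality of `f₁` and `f₂` makes their Sylvester matrix invertible.
The Sylvester matrix of `q₁` and `p₂` reduces to it, and the kernel of `A → K` lies in the
Jacobson radical, also after passing to matrix rings, so it is invertible over `A` as well.
Over a noncommutative ring this says that `(s, t) ↦ s * p₂ + t * q₁` is a bijection from pairs with
`deg s < deg q₁`, `deg t < deg p₂` onto the polynomials of degree `< deg p`. Surjectivity puts `1`
into `A[X]p₂ + A[X]q₁`. If `s * p₂ = t * q₁`, divide `t = w * q₂ + t'` on the right: then
`(s - w * p₁) * p₂ = t' * q₁` has small degree, so injectivity forces `s = w * p₁`, i.e.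
`s * p₂ ∈ A[X]p`. The decomposition of `A[X]/A[X]p` is then the Chinese remainder theorem.
-/

open Polynomial
open scoped Matrix

namespace Ideal

variable {R : Type*} [Ring R]

theorem mem_jacobson_bot_iff_forall_isUnit_one_add_mul {x : R} :
    x ∈ jacobson (⊥ : Ideal R) ↔ ∀ y, IsUnit (1 + y * x) := by
  refine ⟨fun hx y => ?_, fun h => mem_jacobson_iff.2 fun y => ?_⟩
  · obtain ⟨z, hz⟩ := mem_jacobson_iff.1 hx y
    obtain ⟨w, hw⟩ := mem_jacobson_iff.1 hx (-(z * y))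
    rw [mem_bot] at hz hw
    have hzl : z * (1 + y * x) = 1 := by rw [← sub_eq_zero, ← hz]; noncomm_ring
    -- `z = 1 - z * y * x` is left invertible as well, so its right inverse `1 + y * x` is its inverse
    have hwz : w * z = 1 := by
      rw [← sub_eq_zero, ← hw]
      have : z = 1 - z * y * x := by rw [← hzl]; noncomm_ring
      nth_rewrite 1 [this]; noncomm_ring
    have hzr : (1 + y * x) * z = 1 := by
      rw [← left_inv_eq_right_inv hwz hzl, hwz]
    exact ⟨⟨1 + y * x, z, hzr, hzl⟩, rfl⟩
  · obtain ⟨u, hu⟩ := h y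
    refine ⟨↑u⁻¹, ?_⟩
    rw [mem_bot, mul_assoc, sub_eq_zero, ← mul_add_one, add_comm, ← hu, Units.inv_mul]

end Ideal

section LocalHom

variable {R S : Type*} [Ring R] [Ring S] {f : R →+* S}

theorem isLocalHom_of_surjective_of_ker_le_jacobson (hf : Function.Surjective f)
    (hker : RingHom.ker f ≤ Ideal.jacobson ⊥) : IsLocalHom f := by
  have isUnit_mul : ∀ a b, f (a * b) = 1 → IsUnit (a * b) := fun a b h => by
    have hmem : 1 - a * b ∈ RingHom.ker f := by simp [h]
    simpa using Ideal.mem_jacobson_bot_iff_forall_isUnit_one_add_mul.1 (hker hmem) (-1)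
  refine ⟨fun a ha => ?_⟩
  obtain ⟨b, hb⟩ := hf ↑ha.unit⁻¹
  have hab := isUnit_mul a b (by rw [map_mul, hb, IsUnit.mul_val_inv])
  have hba := isUnit_mul b a (by rw [map_mul, hb, IsUnit.val_inv_mul])
  have hright : a * (b * ↑hab.unit⁻¹) = 1 := by rw [← mul_assoc, IsUnit.mul_val_inv]
  have hleft : ↑hba.unit⁻¹ * b * a = 1 := by rw [mul_assoc, IsUnit.val_inv_mul]
  exact ⟨⟨a, _, hright, left_inv_eq_right_inv hleft hright ▸ hleft⟩, rfl⟩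

theorem isLocalHom_mapMatrix_of_surjective_of_ker_le_jacobson (hf : Function.Surjective f)
    (hker : RingHom.ker f ≤ Ideal.jacobson ⊥) (n : Type*) [Fintype n] [DecidableEq n] :
    IsLocalHom (f.mapMatrix : Matrix n n R →+* Matrix n n S) := by
  refine isLocalHom_of_surjective_of_ker_le_jacobson
    (fun N => ⟨N.map (Function.surjInv hf), by ext; simp [Function.surjInv_eq hf]⟩) ?_
  intro M hM
  rw [← Ideal.matrix_bot]
  refine Ideal.matrix_jacobson_le ⊥ fun i j => hker ?_
  simpa using congrArg (· i j) (RingHom.mem_ker.1 hM)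

end LocalHom

namespace Submodule

variable {R M : Type*} [Ring R] [AddCommGroup M] [Module R M]

noncomputable def quotientInfEquivQuotientProd (N N' : Submodule R M) (h : N ⊔ N' = ⊤) :
    (M ⧸ N ⊓ N') ≃ₗ[R] (M ⧸ N) × (M ⧸ N') :=
  have hsurj : Function.Surjective (N.mkQ.prod N'.mkQ) := by
    rintro ⟨x, y⟩
    obtain ⟨x, rfl⟩ := N.mkQ_surjective x
    obtain ⟨y, rfl⟩ := N'.mkQ_surjective y
    obtain ⟨u, hu, v, hv, huv⟩ := mem_sup.1 (h ▸ mem_top : x - y ∈ N ⊔ N')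
    refine ⟨x - u, Prod.ext ((Quotient.eq _).2 ?_) ((Quotient.eq _).2 ?_)⟩
    · simpa using neg_mem hu
    · rwa [sub_right_comm, ← huv, add_sub_cancel_left]
  (quotEquivOfEq _ _ (by rw [LinearMap.ker_prod, ker_mkQ, ker_mkQ])).trans
    ((N.mkQ.prod N'.mkQ).quotKerEquivOfSurjective hsurj)

end Submodule

namespace Polynomial

section Semiring

variable {R : Type*} [Semiring R] {f g s t : R[X]} {m n : ℕ}

theorem coeff_X_pow_mul_of_natDegree_le (hg : g.natDegree ≤ n) (j i : ℕ) :
    (X ^ j * g).coeff i = if i ∈ Set.Icc j (j + n) then g.coeff (i - j) else 0 := by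
  simp only [coeff_X_pow_mul', Set.mem_Icc]
  by_cases hji : j ≤ i
  · by_cases hin : i ≤ j + n
    · simp [hji, hin]
    · simp [hji, hin, coeff_eq_zero_of_natDegree_lt (show g.natDegree < i - j by omega)]
  · simp [hji]

theorem sylvester_apply_castAdd (hg : g.natDegree ≤ n) (i : Fin (m + n)) (j : Fin m) :
    sylvester f g m n i (Fin.castAdd n j) = (X ^ (j : ℕ) * g).coeff i := by
  simp [sylvester, coeff_X_pow_mul_of_natDegree_le hg]

theorem sylvester_apply_natAdd (hf : f.natDegree ≤ m) (i : Fin (m + n)) (j : Fin n) :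
    sylvester f g m n i (Fin.natAdd m j) = (X ^ (j : ℕ) * f).coeff i := by
  simp [sylvester, coeff_X_pow_mul_of_natDegree_le hf]

theorem coeff_mul_eq_sum_fin (hs : s ∈ R[X]_m) (g : R[X]) (i : ℕ) :
    (s * g).coeff i = ∑ j : Fin m, s.coeff j * (X ^ (j : ℕ) * g).coeff i := by
  have hsum := sum_fin (fun j a => a * (X ^ j * g).coeff i) (by simp) (mem_degreeLT.1 hs)
  rw [hsum]
  conv_lhs => rw [← s.sum_C_mul_X_pow_eq]
  simp [Polynomial.sum, Finset.sum_mul, mul_assoc, coeff_C_mul]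

theorem mul_add_mul_mem_degreeLT (hf : f.natDegree ≤ m) (hg : g.natDegree ≤ n)
    (hs : s ∈ R[X]_m) (ht : t ∈ R[X]_n) : s * g + t * f ∈ R[X]_(m + n) := by
  rw [mem_degreeLT, degree_lt_iff_coeff_zero]
  intro k hk
  rw [coeff_add, coeff_mul_eq_sum_fin hs, coeff_mul_eq_sum_fin ht]
  simp only [coeff_X_pow_mul_of_natDegree_le hf, coeff_X_pow_mul_of_natDegree_le hg, Set.mem_Icc]
  rw [Finset.sum_eq_zero fun j _ => by rw [if_neg (by omega), mul_zero],
    Finset.sum_eq_zero fun j _ => by rw [if_neg (by omega), mul_zero], add_zero]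

theorem vecMul_transpose_sylvester (hf : f.natDegree ≤ m) (hg : g.natDegree ≤ n)
    (hs : s ∈ R[X]_m) (ht : t ∈ R[X]_n) :
    Matrix.vecMul (Fin.append (degreeLTEquiv R m ⟨s, hs⟩) (degreeLTEquiv R n ⟨t, ht⟩))
      (sylvester f g m n)ᵀ = degreeLTEquiv R (m + n) ⟨_, mul_add_mul_mem_degreeLT hf hg hs ht⟩ := by
  ext i
  simp [Matrix.vecMul, dotProduct, Fin.sum_univ_add, sylvester_apply_castAdd hg,
    sylvester_apply_natAdd hf, coeff_mul_eq_sum_fin hs, coeff_mul_eq_sum_fin ht, degreeLTEquiv]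

end Semiring

theorem isUnit_sylvester_of_isCoprime {R : Type*} [CommRing R] {f g : R[X]} (hf : f.Monic)
    (h : IsCoprime f g) : IsUnit (sylvester f g f.natDegree g.natDegree) :=
  (Matrix.isUnit_iff_isUnit_det _).2 ((isUnit_resultant_iff_isCoprime hf).2 h)

section Ring

variable {R : Type*} [Ring R] {f g s t r : R[X]} {m n : ℕ}

theorem degree_opRingEquiv_op (p : R[X]) : (opRingEquiv R (MulOpposite.op p)).degree = p.degree := by
  rw [degree, degree, support_opRingEquiv, MulOpposite.unop_op]

theorem exists_eq_mul_add_of_monic [Nontrivial R] {q : R[X]} (hq : q.Monic) (t : R[X]) :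
    ∃ w r : R[X], t = w * q + r ∧ r.degree < q.degree := by
  set e := opRingEquiv R
  have hq' : (e (MulOpposite.op q)).Monic := by
    simp [Monic, e, leadingCoeff_opRingEquiv, hq.leadingCoeff]
  refine ⟨(e.symm (e (.op t) /ₘ e (.op q))).unop, (e.symm (e (.op t) %ₘ e (.op q))).unop, ?_, ?_⟩
  · apply MulOpposite.op_injective; apply e.injective
    simpa [e, add_comm] using (modByMonic_add_div (e (.op t)) (e (.op q))).symm
  · rw [← degree_opRingEquiv_op, ← degree_opRingEquiv_op q]
    simpa [e] using degree_modByMonic_lt _ hq'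

theorem exists_mul_add_mul_eq_of_isUnit_sylvester (hf : f.natDegree ≤ m) (hg : g.natDegree ≤ n)
    (hS : IsUnit (sylvester f g m n)ᵀ) (hr : r ∈ R[X]_(m + n)) :
    ∃ s t : R[X], s * g + t * f = r := by
  obtain ⟨v, hv⟩ := (Matrix.vecMul_surjective_iff_exists_left_inverse.2 hS.exists_left_inv)
    (degreeLTEquiv R (m + n) ⟨r, hr⟩)
  set s := (degreeLTEquiv R m).symm fun j => v (Fin.castAdd n j)
  set t := (degreeLTEquiv R n).symm fun j => v (Fin.natAdd m j)
  have key : degreeLTEquiv R (m + n) ⟨_, mul_add_mul_mem_degreeLT hf hg s.2 t.2⟩ =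
      degreeLTEquiv R (m + n) ⟨r, hr⟩ := by
    rw [← vecMul_transpose_sylvester hf hg s.2 t.2, ← hv]
    simp [s, t, Fin.append_castAdd_natAdd]
  exact ⟨s, t, congrArg Subtype.val ((degreeLTEquiv R (m + n)).injective key)⟩

theorem eq_zero_of_mul_add_mul_eq_zero_of_isUnit_sylvester (hf : f.natDegree ≤ m)
    (hg : g.natDegree ≤ n) (hS : IsUnit (sylvester f g m n)ᵀ) (hs : s ∈ R[X]_m)
    (ht : t ∈ R[X]_n) (h : s * g + t * f = 0) : s = 0 ∧ t = 0 := by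
  have hv : Matrix.vecMul (Fin.append (degreeLTEquiv R m ⟨s, hs⟩) (degreeLTEquiv R n ⟨t, ht⟩))
      (sylvester f g m n)ᵀ = Matrix.vecMul 0 (sylvester f g m n)ᵀ := by
    rw [Matrix.zero_vecMul, vecMul_transpose_sylvester hf hg hs ht]
    convert map_zero (degreeLTEquiv R (m + n))
    simpa using h
  have happ := Matrix.vecMul_injective_of_isUnit hS hv
  constructor
  · rw [← degreeLTEquiv_eq_zero_iff_eq_zero hs]
    ext j; simpa using congrFun happ (Fin.castAdd n j)
  · rw [← degreeLTEquiv_eq_zero_iff_eq_zero ht]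
    ext j; simpa using congrFun happ (Fin.natAdd m j)

theorem span_sup_span_eq_top_of_isUnit_sylvester (hf : f.natDegree ≤ m) (hg : g.Monic)
    (hgn : g.natDegree ≤ n) (hS : IsUnit (sylvester f g m n)ᵀ) :
    Ideal.span {g} ⊔ Ideal.span {f} = ⊤ := by
  rcases Nat.eq_zero_or_pos (m + n) with hmn | hmn
  · rw [eq_one_of_monic_natDegree_zero hg (by omega), Ideal.span_singleton_one, top_sup_eq]
  obtain ⟨s, t, hst⟩ := exists_mul_add_mul_eq_of_isUnit_sylvester hf hgn hS
    (mem_degreeLT.2 (degree_one_le.trans_lt (by exact_mod_cast hmn)))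
  rw [Ideal.eq_top_iff_one, ← hst]
  exact Submodule.add_mem_sup (Ideal.mul_mem_left _ _ (Ideal.mem_span_singleton_self _))
    (Ideal.mul_mem_left _ _ (Ideal.mem_span_singleton_self _))

theorem span_inf_span_eq_of_isUnit_sylvester [Nontrivial R] {p₁ p₂ q₁ q₂ : R[X]}
    (hp₂ : p₂.Monic) (hp₂n : p₂.natDegree = n) (hq₁ : q₁.natDegree ≤ m) (hq₂ : q₂.Monic)
    (hq₂n : q₂.natDegree ≤ n) (h : p₁ * p₂ = q₂ * q₁) (hS : IsUnit (sylvester q₁ p₂ m n)ᵀ) :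
    Ideal.span {p₂} ⊓ Ideal.span {q₁} = Ideal.span {p₁ * p₂} := by
  refine le_antisymm (fun r hr => ?_) (le_inf ?_ ?_)
  · obtain ⟨s, rfl⟩ := Ideal.mem_span_singleton'.1 (Submodule.mem_inf.1 hr).1
    obtain ⟨t, ht⟩ := Ideal.mem_span_singleton'.1 (Submodule.mem_inf.1 hr).2
    -- reducing `t` modulo `q₂` on the right trades `t * q₁` for a multiple of `p₁ * p₂ = q₂ * q₁`
    obtain ⟨w, t', rfl, ht'⟩ := exists_eq_mul_add_of_monic hq₂ t
    have hkey : (s - w * p₁) * p₂ + -t' * q₁ = 0 := by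
      rw [sub_mul, mul_assoc, h, ← ht]; noncomm_ring
    have ht'n : t' ∈ R[X]_n := mem_degreeLT.2 (ht'.trans_le (degree_le_of_natDegree_le hq₂n))
    have hs'm : s - w * p₁ ∈ R[X]_m := by
      have hmem := mul_add_mul_mem_degreeLT hq₁ hp₂n.le (Submodule.zero_mem _) ht'n
      rw [zero_mul, zero_add, ← neg_neg (t' * q₁), ← neg_mul, ← eq_neg_of_add_eq_zero_left hkey,
        mem_degreeLT, hp₂.degree_mul, degree_eq_natDegree hp₂.ne_zero, hp₂n, Nat.cast_add] at hmem
      exact mem_degreeLT.2 ((WithBot.add_lt_add_iff_right WithBot.coe_ne_bot).1 hmem)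
    obtain ⟨hs', -⟩ := eq_zero_of_mul_add_mul_eq_zero_of_isUnit_sylvester hq₁ hp₂n.le hS hs'm
      (neg_mem ht'n) hkey
    exact Ideal.mem_span_singleton'.2 ⟨w, by rw [← mul_assoc, ← sub_eq_zero.1 hs']⟩
  · exact Ideal.span_le.2 (Set.singleton_subset_iff.2
      (Ideal.mul_mem_left _ _ (Ideal.mem_span_singleton_self _)))
  · rw [h]
    exact Ideal.span_le.2 (Set.singleton_subset_iff.2
      (Ideal.mul_mem_left _ _ (Ideal.mem_span_singleton_self _)))

end Ring

end Polynomial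

theorem quotient_splits_of_two_sided_factorization_general
    {A : Type*} [Ring A] {K : Type*} [Field K]
    (π : A →+* K) (hπsurj : Function.Surjective π)
    (hπker : ∀ a : A, π a = 0 ↔ ¬ IsUnit a)
    (p p₁ p₂ q₁ q₂ : A[X]) (f₁ f₂ : K[X])
    (hp₂ : p₂.Monic) (hq₁ : q₁.Monic) (hq₂ : q₂.Monic)
    (hf₁ : f₁.Monic) (hcop : IsCoprime f₁ f₂)
    (hfact₁ : p = p₁ * p₂) (hfact₂ : p = q₂ * q₁)
    (hredq₁ : q₁.map π = f₁)
    (hred₂ : p₂.map π = f₂) (hredq₂ : q₂.map π = f₂) :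
    Ideal.span {p₂} ⊔ Ideal.span {q₁} = (⊤ : Ideal A[X]) ∧
    Ideal.span {p₂} ⊓ Ideal.span {q₁} = (Ideal.span {p} : Ideal A[X]) ∧
    Nonempty ((A[X] ⧸ (Ideal.span {p} : Ideal A[X])) ≃ₗ[A[X]]
      (A[X] ⧸ (Ideal.span {p₂} : Ideal A[X])) × (A[X] ⧸ (Ideal.span {q₁} : Ideal A[X]))) := by
  have : Nontrivial A := π.domain_nontrivial
  have hker : RingHom.ker π ≤ Ideal.jacobson ⊥ := fun a ha =>
    Ideal.mem_jacobson_bot_iff_forall_isUnit_one_add_mul.2 fun y => by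
      by_contra hy
      simpa [RingHom.mem_ker.1 ha] using (hπker _).2 hy
  have natDegree_eq {r : A[X]} {f : K[X]} (hr : r.Monic) (hrf : r.map π = f) :
      r.natDegree = f.natDegree := hrf ▸ (hr.natDegree_map π).symm
  have hS : IsUnit (sylvester q₁ p₂ f₁.natDegree f₂.natDegree)ᵀ := by
    have := isLocalHom_mapMatrix_of_surjective_of_ker_le_jacobson hπsurj hker
      (Fin (f₁.natDegree + f₂.natDegree))
    refine IsUnit.of_map π.mapMatrix _ ?_
    rw [RingHom.mapMatrix_apply, Matrix.transpose_map, ← RingHom.mapMatrix_apply,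
      ← sylvester_map_map, hredq₁, hred₂, Matrix.isUnit_transpose]
    exact isUnit_sylvester_of_isCoprime hf₁ hcop
  have hsup := span_sup_span_eq_top_of_isUnit_sylvester (natDegree_eq hq₁ hredq₁).le hp₂
    (natDegree_eq hp₂ hred₂).le hS
  have hinf : Ideal.span {p₂} ⊓ Ideal.span {q₁} = Ideal.span {p} := hfact₁ ▸
    span_inf_span_eq_of_isUnit_sylvester hp₂ (natDegree_eq hp₂ hred₂) (natDegree_eq hq₁ hredq₁).le
      hq₂ (natDegree_eq hq₂ hredq₂).le (hfact₁.symm.trans hfact₂) hS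
  exact ⟨hsup, hinf,
    ⟨(Submodule.quotEquivOfEq _ _ hinf.symm).trans (Submodule.quotientInfEquivQuotientProd _ _ hsup)⟩⟩

/-- Let `A` be a (possibly non-commutative) local ring with commutative residue field `K`,
encoded by a surjective ring homomorphism `π : A → K` onto a field whose kernel is exactly the
set of non-units of `A`.  Let `p ∈ A[x]` be monic with `p = p₁p₂ = q₂q₁`, where
`p₁, p₂, q₁, q₂ ∈ A[x]` are monic and the reductions satisfy `p̄₁ = q̄₁ = f₁`, `p̄₂ = q̄₂ = f₂`
for relatively prime monic polynomials `f₁, f₂ ∈ K[x]`.  Then (as left ideals, `Ideal.span {p}`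
being `A[x]p`) we have `A[x]p₂ + A[x]q₁ = A[x]` and `A[x]p₂ ∩ A[x]q₁ = A[x]p`, and consequently
the left `A[x]`-module `A[x]/A[x]p` is isomorphic to `A[x]/A[x]p₂ ⊕ A[x]/A[x]q₁`. -/
theorem quotient_splits_of_two_sided_factorization
    {A : Type*} [Ring A] {K : Type*} [Field K]
    (π : A →+* K) (hπsurj : Function.Surjective π)
    (hπker : ∀ a : A, π a = 0 ↔ ¬ IsUnit a)
    (p p₁ p₂ q₁ q₂ : A[X]) (f₁ f₂ : K[X])
    (hpmonic : p.Monic) (hp₁ : p₁.Monic) (hp₂ : p₂.Monic) (hq₁ : q₁.Monic) (hq₂ : q₂.Monic)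
    (hf₁ : f₁.Monic) (hf₂ : f₂.Monic) (hcop : IsCoprime f₁ f₂)
    (hfact₁ : p = p₁ * p₂) (hfact₂ : p = q₂ * q₁)
    (hred₁ : p₁.map π = f₁) (hredq₁ : q₁.map π = f₁)
    (hred₂ : p₂.map π = f₂) (hredq₂ : q₂.map π = f₂) :
    Ideal.span {p₂} ⊔ Ideal.span {q₁} = (⊤ : Ideal A[X]) ∧
    Ideal.span {p₂} ⊓ Ideal.span {q₁} = (Ideal.span {p} : Ideal A[X]) ∧
    Nonempty ((A[X] ⧸ (Ideal.span {p} : Ideal A[X])) ≃ₗ[A[X]]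
      (A[X] ⧸ (Ideal.span {p₂} : Ideal A[X])) × (A[X] ⧸ (Ideal.span {q₁} : Ideal A[X]))) :=
  quotient_splits_of_two_sided_factorization_general π hπsurj hπker p p₁ p₂ q₁ q₂ f₁ f₂ hp₂ hq₁ hq₂
    hf₁ hcop hfact₁ hfact₂ hredq₁ hred₂ hredq₂
end

section
/- Let A be a local ring with maximal ideal m and commutative residue field k, and let p ∈ A[x] be a monic polynomial whose reduction p̄ ∈ k[x] is a power of an irreducible polynomial. Then the left A[x]-module A[x]/A[x]p is local, i.e. it has a unique maximal A[x]-submodule. -/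
/-!
Write `p̄ = gⁿ` with `g` irreducible and let `J` be the left ideal of polynomials whose reduction
is divisible by `g`; it contains `A[x]p` and is proper. A left ideal `I ⊇ A[x]p` not contained in
`J` contains some `q` with `q̄` coprime to `p̄`, hence some `r = 1 + s` with `s̄ = 0`. Since the
monic `p` lies in `I`, the `A`-module `A[x]/I` is finitely generated, and every class
`[f] = -[f s]` lies in `m • (A[x]/I)` because `f s` has coefficients in `m`. As `m` lies in the
Jacobson radical of `A`, Nakayama's lemma gives `A[x]/I = 0`, i.e. `I = A[x]`. So `J / A[x]p` is
the largest proper submodule of `A[x]/A[x]p`.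
-/

open Polynomial

theorem RingHom.ker_le_ringJacobson {A B : Type*} [Ring A] [Ring B] (f : A →+* B) [IsLocalHom f] :
    RingHom.ker f ≤ Ring.jacobson A := by
  intro x hx
  rw [← Ideal.jacobson_bot, Ideal.mem_jacobson_iff]
  intro y
  obtain ⟨u, hu⟩ : IsUnit (1 + y * x) :=
    isUnit_of_map_unit f (1 + y * x) (by simp [RingHom.mem_ker.mp hx])
  refine ⟨↑u⁻¹, ?_⟩
  rw [Ideal.mem_bot, sub_eq_zero, mul_assoc, ← mul_add_one (↑u⁻¹ : A), add_comm, ← hu,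
    Units.inv_mul]

namespace Polynomial

variable {A : Type*} [Ring A] {I : Ideal A[X]}

theorem mk_eq_sum_coeff_smul_mk_X_pow (f : A[X]) :
    (Submodule.Quotient.mk f : A[X] ⧸ I) =
      ∑ i ∈ Finset.range (f.natDegree + 1), f.coeff i • Submodule.Quotient.mk (X ^ i) := by
  conv_lhs => rw [f.as_sum_range_C_mul_X_pow, ← Submodule.mkQ_apply, map_sum]
  simp only [← smul_eq_C_mul, Submodule.mkQ_apply, Submodule.Quotient.mk_smul]

theorem mk_X_pow_mem_span_of_monic_mem {p : A[X]} (hp : p.Monic) (hpI : p ∈ I) (n : ℕ) :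
    Submodule.Quotient.mk (X ^ n) ∈ Submodule.span A
      (Set.range fun j : Fin p.natDegree => (Submodule.Quotient.mk (X ^ (j : ℕ)) : A[X] ⧸ I)) := by
  induction n using Nat.strong_induction_on with
  | _ n ih =>
    by_cases hn : n < p.natDegree
    · exact Submodule.subset_span ⟨⟨n, hn⟩, rfl⟩
    obtain ⟨k, rfl⟩ := Nat.exists_eq_add_of_le (not_lt.mp hn)
    have hshift : X ^ k * p = X ^ (p.natDegree + k) +
        ∑ i ∈ Finset.range p.natDegree, p.coeff i • X ^ (i + k) := by
      conv_lhs => rw [hp.as_sum]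
      simp only [mul_add, Finset.mul_sum, ← pow_add, C_mul_X_pow_eq_monomial, X_pow_mul_monomial,
        smul_X_eq_monomial, add_comm k]
    have hmk : (Submodule.Quotient.mk (X ^ (p.natDegree + k)) : A[X] ⧸ I) =
        -∑ i ∈ Finset.range p.natDegree, p.coeff i • Submodule.Quotient.mk (X ^ (i + k)) := by
      rw [eq_neg_iff_add_eq_zero, ← (Submodule.Quotient.mk_eq_zero I).mpr (I.smul_mem (X ^ k) hpI),
        smul_eq_mul, hshift]
      simp only [← Submodule.mkQ_apply, map_add, map_sum, LinearMap.map_smul_of_tower]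
    rw [hmk]
    refine neg_mem (Submodule.sum_mem _ fun i hi => Submodule.smul_mem _ _ (ih _ ?_))
    have := Finset.mem_range.mp hi
    omega

theorem fg_top_quotient_of_monic_mem {p : A[X]} (hp : p.Monic) (hpI : p ∈ I) :
    (⊤ : Submodule A (A[X] ⧸ I)).FG := by
  refine Submodule.fg_def.mpr
    ⟨Set.range fun j : Fin p.natDegree => Submodule.Quotient.mk (X ^ (j : ℕ)), Set.finite_range _,
      eq_top_iff.mpr ?_⟩
  rintro x -
  obtain ⟨f, rfl⟩ := Submodule.Quotient.mk_surjective I x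
  rw [mk_eq_sum_coeff_smul_mk_X_pow]
  exact Submodule.sum_mem _ fun i _ =>
    Submodule.smul_mem _ _ (mk_X_pow_mem_span_of_monic_mem hp hpI i)

theorem mk_mem_smul_top_of_coeff_mem {𝔞 : Ideal A} {f : A[X]} (hf : ∀ n, f.coeff n ∈ 𝔞) :
    (Submodule.Quotient.mk f : A[X] ⧸ I) ∈ 𝔞 • (⊤ : Submodule A (A[X] ⧸ I)) := by
  rw [mk_eq_sum_coeff_smul_mk_X_pow]
  exact Submodule.sum_mem _ fun i _ => Submodule.smul_mem_smul (hf i) Submodule.mem_top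

theorem top_le_smul_top_of_one_add_mem {𝔞 : Ideal A} {s : A[X]} (hs : ∀ n, s.coeff n ∈ 𝔞)
    (hsI : 1 + s ∈ I) : (⊤ : Submodule A (A[X] ⧸ I)) ≤ 𝔞 • ⊤ := by
  rintro x -
  obtain ⟨f, rfl⟩ := Submodule.Quotient.mk_surjective I x
  have hmk : (Submodule.Quotient.mk f : A[X] ⧸ I) = -Submodule.Quotient.mk (f * s) := by
    rw [eq_neg_iff_add_eq_zero, ← Submodule.Quotient.mk_add, Submodule.Quotient.mk_eq_zero,
      ← mul_one_add]
    exact I.smul_mem f hsI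
  rw [hmk]
  refine neg_mem (mk_mem_smul_top_of_coeff_mem fun n => ?_)
  rw [coeff_mul]
  exact Ideal.sum_mem _ fun ij _ => 𝔞.mul_mem_left _ (hs ij.2)

theorem eq_top_of_monic_mem_of_map_eq_one {B : Type*} [Ring B] (f : A →+* B) [IsLocalHom f]
    {p r : A[X]} (hp : p.Monic) (hpI : p ∈ I) (hrI : r ∈ I) (hr : r.map f = 1) : I = ⊤ := by
  have hs : ∀ n, (r - 1).coeff n ∈ Ring.jacobson A := fun n => f.ker_le_ringJacobson <| by
    rw [RingHom.mem_ker, ← coeff_map, Polynomial.map_sub, hr, Polynomial.map_one, sub_self,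
      coeff_zero]
  have hbot : (⊤ : Submodule A (A[X] ⧸ I)) = ⊥ :=
    (fg_top_quotient_of_monic_mem hp hpI).eq_bot_of_le_jacobson_smul
      (top_le_smul_top_of_one_add_mem hs (by rwa [add_sub_cancel]))
  rw [Ideal.eq_top_iff_one, ← Submodule.Quotient.mk_eq_zero]
  exact (Submodule.eq_bot_iff _).mp hbot _ Submodule.mem_top

theorem exists_mem_map_eq_one_of_isCoprime {K : Type*} [CommRing K] (π : A →+* K)
    (hπ : Function.Surjective π) {p q : A[X]} (hpI : p ∈ I) (hqI : q ∈ I)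
    (h : IsCoprime (p.map π) (q.map π)) : ∃ r ∈ I, r.map π = 1 := by
  obtain ⟨u, v, huv⟩ := h
  obtain ⟨U, rfl⟩ := map_surjective π hπ u
  obtain ⟨V, rfl⟩ := map_surjective π hπ v
  exact ⟨U * p + V * q, I.add_mem (I.mul_mem_left U hpI) (I.mul_mem_left V hqI),
    by rwa [Polynomial.map_add, Polynomial.map_mul, Polynomial.map_mul]⟩

end Polynomial

theorem existsUnique_isCoatom_of_forall_le {α : Type*} [PartialOrder α] [OrderTop α] {a : α}
    (ha : a ≠ ⊤) (h : ∀ b, b ≠ ⊤ → b ≤ a) : ∃! b : α, IsCoatom b :=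
  ⟨a, ⟨ha, fun b hab => by_contra fun hb => (h b hb).not_gt hab⟩,
    fun b hb => ((hb.le_iff.mp (h b hb.1)).resolve_left ha).symm⟩

theorem Submodule.existsUnique_isCoatom_quotient {R M : Type*} [Ring R] [AddCommGroup M]
    [Module R M] {N J : Submodule R M} (hNJ : N ≤ J) (hJ : J ≠ ⊤)
    (h : ∀ I : Submodule R M, N ≤ I → I ≠ ⊤ → I ≤ J) : ∃! Q : Submodule R (M ⧸ N), IsCoatom Q := by
  have hmap_comap (Q : Submodule R (M ⧸ N)) : (Q.comap N.mkQ).map N.mkQ = Q :=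
    map_comap_eq_of_surjective N.mkQ_surjective Q
  refine existsUnique_isCoatom_of_forall_le (a := J.map N.mkQ) (fun hJtop => hJ ?_)
    fun Q hQ => ?_
  · rw [← sup_eq_right.mpr hNJ, ← comap_map_mkQ, hJtop, comap_top]
  · rw [← hmap_comap Q]
    refine map_mono (h _ ?_ fun htop => hQ ?_)
    · exact (ker_mkQ N).ge.trans (LinearMap.ker_le_comap _)
    · rw [← hmap_comap Q, htop, map_top, range_mkQ]

/-- Let `A` be a (possibly non-commutative) local ring with commutative residue field `K`,
encoded by a surjective ring homomorphism `π : A → K` onto a field whose kernel is exactly the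
set of non-units of `A`.  Let `p ∈ A[x]` be a monic polynomial whose reduction `p̄ ∈ K[x]` is a
power of an irreducible polynomial.  Then the left `A[x]`-module `A[x]/A[x]p` is local, i.e. it
has a unique maximal `A[x]`-submodule (a unique coatom in its submodule lattice). -/
theorem quotient_local_of_power_of_irreducible
    {A : Type*} [Ring A] {K : Type*} [Field K]
    (π : A →+* K) (hπsurj : Function.Surjective π)
    (hπker : ∀ a : A, π a = 0 ↔ ¬ IsUnit a)
    (p : A[X]) (hp : p.Monic)
    (hpow : ∃ (g : K[X]) (n : ℕ), Irreducible g ∧ 0 < n ∧ p.map π = g ^ n) :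
    ∃! P : Submodule A[X] (A[X] ⧸ (Ideal.span {p} : Ideal A[X])), IsCoatom P := by
  obtain ⟨g, n, hg, hn, hmap⟩ := hpow
  have : IsLocalHom π := ⟨fun a ha => not_not.mp ((hπker a).not.mp ha.ne_zero)⟩
  set J : Ideal A[X] := Ideal.comap (mapRingHom π) (Ideal.span {g})
  have hmemJ (q : A[X]) : q ∈ J ↔ g ∣ q.map π := Ideal.mem_span_singleton
  refine Submodule.existsUnique_isCoatom_quotient (J := J) ?_ ?_ fun I hNI hI => ?_
  · rw [Ideal.span_le, Set.singleton_subset_iff, SetLike.mem_coe, hmemJ, hmap]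
    exact dvd_pow_self g hn.ne'
  · rw [Ne, Ideal.eq_top_iff_one, hmemJ, Polynomial.map_one]
    exact hg.not_isUnit ∘ isUnit_of_dvd_one
  · by_contra hIJ
    have hpI : p ∈ I := hNI (Ideal.mem_span_singleton_self p)
    obtain ⟨q, hqI, hqJ⟩ := SetLike.not_le_iff_exists.mp hIJ
    have hcop : IsCoprime (p.map π) (q.map π) :=
      hmap ▸ ((hg.coprime_iff_not_dvd).mpr ((hmemJ q).not.mp hqJ)).pow_left
    obtain ⟨r, hrI, hr⟩ := exists_mem_map_eq_one_of_isCoprime π hπsurj hpI hqI hcop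
    exact hI (eq_top_of_monic_mem_of_map_eq_one π hp hpI hrI hr)
end

section
/- Let A be an almost commutative local ring with maximal ideal m which is separated, i.e. ⋂ₙ mⁿ = {0}. Let f ∈ A[x] be monic with reduction f̄ = f₁f₂ for relatively prime monic polynomials f₁, f₂ ∈ k[x]. If f = F₁F₂ = G₁G₂ where F₁, F₂, G₁, G₂ ∈ A[x] are monic with F̄₁ = Ḡ₁ = f₁ and F̄₂ = Ḡ₂ = f₂, then F₁ = G₁ and F₂ = G₂. -/
/-!
Put `D₁ = F₁ - G₁`, `D₂ = F₂ - G₂` and lift a Bézout identity `u f₁ + v f₂ = 1` to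
`U F₁ + V F₂ ≡ 1 mod m`. Suppose the coefficients of `D₁, D₂` lie in `mⁿ` and pass to
`A ⧸ mⁿ⁺¹`. There `D₁` and `D₂` are central (almost commutativity) and are killed by `m`, so
`F₁ F₂ = G₁ G₂` becomes `F₂ D₁ + F₁ D₂ = 0` and `D₁ = (U D₁ - V D₂) F₁`. As `F₁` is monic of
degree larger than `D₁`, this forces `D₁ = 0` in `A ⧸ mⁿ⁺¹`, and symmetrically `D₂ = 0`. So the
coefficients of `D₁, D₂` lie in every `mⁿ` and vanish by separatedness.
-/

open Polynomial

/-- The `n`-th power of a two-sided ideal, given as a set `m` in a (possibly non-commutative)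
ring `A`, realized as an additive subgroup: `m ^ 0 = A` and `m ^ (n+1)` is the additive group
generated by products `a * b` with `a ∈ m`, `b ∈ m ^ n`. -/
def idealPow {A : Type*} [Ring A] (m : Set A) : ℕ → AddSubgroup A
  | 0 => ⊤
  | n + 1 => AddSubgroup.closure {x | ∃ a ∈ m, ∃ b ∈ idealPow m n, x = a * b}

namespace TwoSidedIdeal

variable {A : Type*} [Ring A] (m : TwoSidedIdeal A)

theorem mul_mem_idealPow_succ {a b : A} {n : ℕ} (ha : a ∈ m) (hb : b ∈ idealPow (m : Set A) n) :
    a * b ∈ idealPow (m : Set A) (n + 1) :=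
  AddSubgroup.subset_closure ⟨a, ha, b, hb, rfl⟩

theorem mul_mem_idealPow_left (c : A) {a : A} {n : ℕ} (ha : a ∈ idealPow (m : Set A) n) :
    c * a ∈ idealPow (m : Set A) n := by
  cases n with
  | zero => trivial
  | succ n =>
    refine AddSubgroup.closure_le (K := (idealPow (m : Set A) (n + 1)).comap
      (AddMonoidHom.mulLeft c)) |>.mpr ?_ ha
    rintro _ ⟨a, ha, b, hb, rfl⟩
    show c * (a * b) ∈ idealPow (m : Set A) (n + 1)
    rw [← mul_assoc]
    exact m.mul_mem_idealPow_succ (m.mul_mem_left c a ha) hb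

theorem mul_mem_idealPow_right (c : A) {a : A} {n : ℕ} (ha : a ∈ idealPow (m : Set A) n) :
    a * c ∈ idealPow (m : Set A) n := by
  induction n generalizing a with
  | zero => trivial
  | succ n ih =>
    refine AddSubgroup.closure_le (K := (idealPow (m : Set A) (n + 1)).comap
      (AddMonoidHom.mulRight c)) |>.mpr ?_ ha
    rintro _ ⟨a, ha, b, hb, rfl⟩
    show a * b * c ∈ idealPow (m : Set A) (n + 1)
    rw [mul_assoc]
    exact m.mul_mem_idealPow_succ ha (ih hb)

def powIdeal (n : ℕ) : TwoSidedIdeal A :=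
  .mk' (idealPow (m : Set A) n) (idealPow _ n).zero_mem (idealPow _ n).add_mem
    (idealPow _ n).neg_mem (m.mul_mem_idealPow_left _) (m.mul_mem_idealPow_right _)

@[simp]
theorem mem_powIdeal {n : ℕ} {a : A} : a ∈ m.powIdeal n ↔ a ∈ idealPow (m : Set A) n :=
  mem_mk' ..

theorem coeff_mem_ker_of_map_eq_zero {B : Type*} [Semiring B] {φ : A →+* B} {p : A[X]}
    (hp : p.map φ = 0) (i : ℕ) : p.coeff i ∈ ker φ :=
  (mem_ker φ).2 (by simpa using congrArg (coeff · i) hp)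

end TwoSidedIdeal

namespace Polynomial

theorem map_ringCon_mk'_eq_zero_iff {A : Type*} [Ring A] (I : TwoSidedIdeal A) {p : A[X]} :
    p.map I.ringCon.mk' = 0 ↔ ∀ i, p.coeff i ∈ I := by
  simp only [Polynomial.ext_iff, coeff_map, coeff_zero, ← TwoSidedIdeal.mem_ker,
    TwoSidedIdeal.ker_ringCon_mk']

theorem coeff_mul_mem {A S : Type*} [Semiring A] [SetLike S A] [AddSubmonoidClass S A] {J : S}
    {p q : A[X]} (h : ∀ i j, p.coeff i * q.coeff j ∈ J) (k : ℕ) : (p * q).coeff k ∈ J := by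
  rw [coeff_mul]
  exact sum_mem fun x _ => h x.1 x.2

theorem commute_of_forall_coeff_commute {B : Type*} [Semiring B] {p : B[X]}
    (hp : ∀ i b, Commute (p.coeff i) b) (r : B[X]) : Commute p r := by
  rw [p.as_sum_range_C_mul_X_pow]
  refine Commute.sum_left _ _ _ fun i _ => Commute.mul_left ?_ (commute_X_pow r i)
  ext k
  simp only [coeff_C_mul, coeff_mul_C]
  exact hp i _

theorem eq_zero_of_bezout {B : Type*} [Ring B] {F F' U V D D' : B[X]} (hF : F.Monic)
    (hD : D.degree < F.degree) (hDF : Commute D F) (hD'F : Commute D' F)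
    (hbez : (U * F + V * F') * D = D) (hrel : F' * D + F * D' = 0) : D = 0 := by
  have hW : D = (U * D - V * D') * F := calc
    D = (U * F + V * F') * D := hbez.symm
    _ = U * (F * D) + V * (F' * D) := by noncomm_ring
    _ = U * (D * F) - V * (D' * F) := by
      rw [hDF.eq, eq_neg_of_add_eq_zero_left hrel, hD'F.eq]; noncomm_ring
    _ = (U * D - V * D') * F := by noncomm_ring
  by_contra hD0
  have hW0 : U * D - V * D' ≠ 0 := fun h => hD0 (by rw [hW, h, zero_mul])
  rw [hW, hF.degree_mul] at hD
  exact hD.not_ge (le_add_of_nonneg_left (zero_le_degree_iff.mpr hW0))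

theorem Monic.degree_sub_lt_of_map_eq {R S : Type*} [Ring R] [Semiring S] [Nontrivial S]
    {φ : R →+* S} {F G : R[X]} (hF : F.Monic) (hG : G.Monic) (h : F.map φ = G.map φ) :
    (F - G).degree < F.degree := by
  have := φ.domain_nontrivial
  have hdeg : F.natDegree = G.natDegree := by
    rw [← hF.natDegree_map φ, h, hG.natDegree_map]
  exact degree_sub_lt_left
    (by rw [degree_eq_natDegree hF.ne_zero, degree_eq_natDegree hG.ne_zero, hdeg])
    hF.ne_zero (by rw [hF.leadingCoeff, hG.leadingCoeff])

end Polynomial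

namespace TwoSidedIdeal

variable {A : Type*} [Ring A] (m : TwoSidedIdeal A)

theorem map_powIdeal_succ_mul_eq_zero {n : ℕ} {p r : A[X]} (hp : ∀ i, p.coeff i ∈ m)
    (hr : ∀ i, r.coeff i ∈ idealPow (m : Set A) n) :
    (p * r).map (m.powIdeal (n + 1)).ringCon.mk' = 0 :=
  (map_ringCon_mk'_eq_zero_iff _).2 <| coeff_mul_mem fun i j =>
    m.mem_powIdeal.2 (m.mul_mem_idealPow_succ (hp i) (hr j))

variable {m}
variable
  (hcomm : ∀ n, ∀ a ∈ idealPow (m : Set A) n, ∀ b, a * b - b * a ∈ idealPow (m : Set A) (n + 1))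
include hcomm

theorem commute_map_powIdeal_succ {n : ℕ} {p : A[X]}
    (hp : ∀ i, p.coeff i ∈ idealPow (m : Set A) n)
    (r : (m.powIdeal (n + 1)).ringCon.Quotient[X]) :
    Commute (p.map (m.powIdeal (n + 1)).ringCon.mk') r := by
  refine commute_of_forall_coeff_commute (fun i b => ?_) r
  obtain ⟨b, rfl⟩ := RingCon.mk'_surjective _ b
  rw [coeff_map, Commute, SemiconjBy, ← map_mul, ← map_mul, ← sub_eq_zero, ← map_sub,
    ← mem_ker, ker_ringCon_mk', mem_powIdeal]
  exact hcomm n _ (hp i) b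

theorem coeff_mem_idealPow_succ_of_bezout {n : ℕ} {F F' U V D D' : A[X]} (hF : F.Monic)
    (hD : D.degree < F.degree) (hDn : ∀ i, D.coeff i ∈ idealPow (m : Set A) n)
    (hD'n : ∀ i, D'.coeff i ∈ idealPow (m : Set A) n)
    (hbez : ∀ i, (U * F + V * F' - 1).coeff i ∈ m)
    (hrel : (F' * D + F * D').map (m.powIdeal (n + 1)).ringCon.mk' = 0) :
    ∀ i, D.coeff i ∈ idealPow (m : Set A) (n + 1) := by
  set q := (m.powIdeal (n + 1)).ringCon.mk'
  suffices D.map q = 0 by simpa using (map_ringCon_mk'_eq_zero_iff _).1 this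
  nontriviality (m.powIdeal (n + 1)).ringCon.Quotient
  refine eq_zero_of_bezout (F' := F'.map q) (U := U.map q) (V := V.map q) (D' := D'.map q)
    (hF.map q) (degree_map_le.trans_lt (hF.degree_map q ▸ hD))
    (commute_map_powIdeal_succ hcomm hDn _) (commute_map_powIdeal_succ hcomm hD'n _) ?_
    (by simpa only [Polynomial.map_mul, Polynomial.map_add] using hrel)
  have := m.map_powIdeal_succ_mul_eq_zero hbez hDn
  simpa only [Polynomial.map_mul, Polynomial.map_sub, Polynomial.map_add, Polynomial.map_one,
    sub_mul, one_mul, sub_eq_zero] using this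

theorem coeff_sub_mem_idealPow_succ {n : ℕ} {F₁ F₂ G₁ G₂ U V : A[X]} (hF₁ : F₁.Monic)
    (hF₂ : F₂.Monic) (hdeg₁ : (F₁ - G₁).degree < F₁.degree)
    (hdeg₂ : (F₂ - G₂).degree < F₂.degree) (hFG : F₁ * F₂ = G₁ * G₂)
    (hbez : ∀ i, (U * F₁ + V * F₂ - 1).coeff i ∈ m) (hD₁ : ∀ i, (F₁ - G₁).coeff i ∈ m)
    (hn₁ : ∀ i, (F₁ - G₁).coeff i ∈ idealPow (m : Set A) n)
    (hn₂ : ∀ i, (F₂ - G₂).coeff i ∈ idealPow (m : Set A) n) :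
    (∀ i, (F₁ - G₁).coeff i ∈ idealPow (m : Set A) (n + 1)) ∧
      (∀ i, (F₂ - G₂).coeff i ∈ idealPow (m : Set A) (n + 1)) := by
  have hrel : (F₂ * (F₁ - G₁) + F₁ * (F₂ - G₂)).map (m.powIdeal (n + 1)).ringCon.mk' = 0 := by
    have : F₂ * (F₁ - G₁) + F₁ * (F₂ - G₂) = (F₂ * (F₁ - G₁) - (F₁ - G₁) * F₂)
        + (F₁ - G₁) * (F₂ - G₂) + (F₁ * F₂ - G₁ * G₂) := by noncomm_ring
    rw [this, hFG, sub_self, add_zero, Polynomial.map_add, Polynomial.map_sub, Polynomial.map_mul,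
      Polynomial.map_mul, (commute_map_powIdeal_succ hcomm hn₁ _).eq, sub_self, zero_add,
      m.map_powIdeal_succ_mul_eq_zero hD₁ hn₂]
  refine ⟨coeff_mem_idealPow_succ_of_bezout hcomm hF₁ hdeg₁ hn₁ hn₂ hbez hrel,
    coeff_mem_idealPow_succ_of_bezout hcomm hF₂ hdeg₂ hn₂ hn₁
      (by simpa only [add_comm (U * F₁)] using hbez) (by rwa [add_comm (F₂ * _)] at hrel)⟩

end TwoSidedIdeal

theorem uniqueness_of_henselian_factorization_general
    {A : Type*} [Ring A] {K : Type*} [Field K]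
    (π : A →+* K) (hπsurj : Function.Surjective π)
    (hπker : ∀ a : A, π a = 0 ↔ ¬ IsUnit a)
    -- almost commutative
    (hac : ∀ i j : ℕ, ∀ a ∈ idealPow {a : A | ¬ IsUnit a} i,
      ∀ b ∈ idealPow {a : A | ¬ IsUnit a} j,
        a * b - b * a ∈ idealPow {a : A | ¬ IsUnit a} (i + j + 1))
    -- separated: `⋂ₙ mⁿ = {0}`
    (hsep : ∀ x : A, (∀ n : ℕ, x ∈ idealPow {a : A | ¬ IsUnit a} n) → x = 0)
    (f : A[X]) (f₁ f₂ : K[X])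
    (hcop : IsCoprime f₁ f₂)
    (F₁ F₂ G₁ G₂ : A[X])
    (hF₁ : F₁.Monic) (hF₂ : F₂.Monic) (hG₁ : G₁.Monic) (hG₂ : G₂.Monic)
    (hfF : f = F₁ * F₂) (hfG : f = G₁ * G₂)
    (hF₁red : F₁.map π = f₁) (hG₁red : G₁.map π = f₁)
    (hF₂red : F₂.map π = f₂) (hG₂red : G₂.map π = f₂) :
    F₁ = G₁ ∧ F₂ = G₂ := by
  set m := TwoSidedIdeal.ker π
  have hm : {a : A | ¬ IsUnit a} = (m : Set A) :=
    Set.ext fun a => (hπker a).symm.trans (TwoSidedIdeal.mem_ker π).symm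
  rw [hm] at hac hsep
  have hcomm (n : ℕ) (a : A) (ha : a ∈ idealPow (m : Set A) n) (b : A) :
      a * b - b * a ∈ idealPow (m : Set A) (n + 1) := by
    simpa using hac n 0 a ha b trivial
  obtain ⟨u, v, huv⟩ := hcop
  obtain ⟨U, rfl⟩ := map_surjective π hπsurj u
  obtain ⟨V, rfl⟩ := map_surjective π hπsurj v
  have hbez : ∀ i, (U * F₁ + V * F₂ - 1).coeff i ∈ m :=
    TwoSidedIdeal.coeff_mem_ker_of_map_eq_zero (by simp [hF₁red, hF₂red, huv])
  have hD₁ : ∀ i, (F₁ - G₁).coeff i ∈ m :=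
    TwoSidedIdeal.coeff_mem_ker_of_map_eq_zero (by simp [hF₁red, hG₁red])
  have hmem (n : ℕ) : (∀ i, (F₁ - G₁).coeff i ∈ idealPow (m : Set A) n) ∧
      (∀ i, (F₂ - G₂).coeff i ∈ idealPow (m : Set A) n) := by
    induction n with
    | zero => exact ⟨fun _ => trivial, fun _ => trivial⟩
    | succ n ih =>
      exact TwoSidedIdeal.coeff_sub_mem_idealPow_succ hcomm hF₁ hF₂
        (hF₁.degree_sub_lt_of_map_eq hG₁ (hF₁red.trans hG₁red.symm))
        (hF₂.degree_sub_lt_of_map_eq hG₂ (hF₂red.trans hG₂red.symm))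
        (hfF.symm.trans hfG) hbez hD₁ ih.1 ih.2
  refine ⟨sub_eq_zero.mp ?_, sub_eq_zero.mp ?_⟩ <;> ext i
  exacts [hsep _ fun n => (hmem n).1 i, hsep _ fun n => (hmem n).2 i]

/-- Let `A` be a (possibly non-commutative) local ring, i.e. the non-invertible elements form a
two-sided ideal `m`; this is encoded by a surjective ring homomorphism `π : A → K` onto the
residue field `K` whose kernel is exactly the set of non-units (so `m = ker π`).  Assume `A` is
almost commutative (the associated graded ring `gr(A) = ⊕ mⁱ/mⁱ⁺¹` is commutative, i.e.
`a * b - b * a ∈ m^(i+j+1)` for `a ∈ mⁱ`, `b ∈ mʲ`) and separated (`⋂ₙ mⁿ = {0}`).  Let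
`f ∈ A[x]` be monic with reduction `f̄ = f₁ * f₂` for relatively prime monic polynomials
`f₁, f₂ ∈ K[x]`.  If `f = F₁F₂ = G₁G₂` where `F₁, F₂, G₁, G₂ ∈ A[x]` are monic with
`F̄₁ = Ḡ₁ = f₁` and `F̄₂ = Ḡ₂ = f₂`, then `F₁ = G₁` and `F₂ = G₂`. -/
theorem uniqueness_of_henselian_factorization
    {A : Type*} [Ring A] {K : Type*} [Field K]
    (π : A →+* K) (hπsurj : Function.Surjective π)
    (hπker : ∀ a : A, π a = 0 ↔ ¬ IsUnit a)
    -- almost commutative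
    (hac : ∀ i j : ℕ, ∀ a ∈ idealPow {a : A | ¬ IsUnit a} i,
      ∀ b ∈ idealPow {a : A | ¬ IsUnit a} j,
        a * b - b * a ∈ idealPow {a : A | ¬ IsUnit a} (i + j + 1))
    -- separated: `⋂ₙ mⁿ = {0}`
    (hsep : ∀ x : A, (∀ n : ℕ, x ∈ idealPow {a : A | ¬ IsUnit a} n) → x = 0)
    (f : A[X]) (hf : f.Monic) (f₁ f₂ : K[X])
    (hf₁ : f₁.Monic) (hf₂ : f₂.Monic) (hcop : IsCoprime f₁ f₂)
    (hred : f.map π = f₁ * f₂)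
    (F₁ F₂ G₁ G₂ : A[X])
    (hF₁ : F₁.Monic) (hF₂ : F₂.Monic) (hG₁ : G₁.Monic) (hG₂ : G₂.Monic)
    (hfF : f = F₁ * F₂) (hfG : f = G₁ * G₂)
    (hF₁red : F₁.map π = f₁) (hG₁red : G₁.map π = f₁)
    (hF₂red : F₂.map π = f₂) (hG₂red : G₂.map π = f₂) :
    F₁ = G₁ ∧ F₂ = G₂ :=
  uniqueness_of_henselian_factorization_general π hπsurj hπker hac hsep f f₁ f₂ hcop F₁ F₂ G₁ G₂ hF₁
    hF₂ hG₁ hG₂ hfF hfG hF₁red hG₁red hF₂red hG₂red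
end

section
/- Let A be an almost commutative local ring with maximal ideal m and residue field k. Let f ∈ A[x] be monic with f̄ = f₁f₂ for relatively prime monic polynomials f₁, f₂ ∈ k[x], and let r ≥ 1. Suppose F₁, F₂ ∈ A[x] are monic with F̄₁ = f₁, F̄₂ = f₂, and f − F₁F₂ ∈ mʳ[x]. Then there exist G₁, G₂ ∈ mʳ[x] with deg(G₁) < deg(f₁) and deg(G₂) < deg(f₂) such that f − (F₁ + G₁)(F₂ + G₂) ∈ m^{r+1}[x]. -/
/-!
Write `Δ = f - F₁F₂ ∈ mʳ[x]`. Since `G₁G₂ ∈ m²ʳ[x] ⊆ mʳ⁺¹[x]`, it suffices to solve the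
linearized congruence `Δ ≡ F₁G₂ + G₁F₂ (mod mʳ⁺¹)`, and its solutions add up, so one monomial
`δ xᵏ` of `Δ` can be treated at a time, with `k < deg f₁ + deg f₂`. As `f₁, f₂` are coprime, over
the residue field `xᵏ = a₁f₂ + a₂f₁` with `deg aᵢ < deg fᵢ`; lift `aᵢ` to `Bᵢ ∈ A[x]` of the same
degree and take `Gᵢ = δBᵢ`. Then `δxᵏ - F₁δB₂ - δB₁F₂ = δ(xᵏ - F₁B₂ - B₁F₂) + (δF₁ - F₁δ)B₂`,
where the first term lies in `mʳ·m[x]` and the second in `mʳ⁺¹[x]` because `gr(A)` is commutative.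
-/

open Polynomial

section IdealPow

variable {A : Type*} [Ring A]

lemma idealPow_succ (m : Set A) (n : ℕ) :
    idealPow m (n + 1) = AddSubgroup.closure {x | ∃ a ∈ m, ∃ b ∈ idealPow m n, x = a * b} :=
  rfl

lemma mem_idealPow_one {m : Set A} {a : A} (ha : a ∈ m) : a ∈ idealPow m 1 :=
  AddSubgroup.subset_closure ⟨a, ha, 1, AddSubgroup.mem_top _, (mul_one a).symm⟩

variable {I : Ideal A}

lemma idealPow_mul_mem_left {n : ℕ} {x : A} (hx : x ∈ idealPow (I : Set A) n) (c : A) :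
    c * x ∈ idealPow (I : Set A) n := by
  cases n with
  | zero => exact AddSubgroup.mem_top _
  | succ n =>
    rw [idealPow_succ] at hx ⊢
    refine (AddSubgroup.closure_le (K := (AddSubgroup.closure _).comap
      (AddMonoidHom.mulLeft c))).2 ?_ hx
    rintro _ ⟨a, ha, b, hb, rfl⟩
    exact AddSubgroup.subset_closure ⟨c * a, I.mul_mem_left c ha, b, hb, (mul_assoc c a b).symm⟩

lemma idealPow_mul_mem {i j : ℕ} {x y : A} (hx : x ∈ idealPow (I : Set A) i)
    (hy : y ∈ idealPow (I : Set A) j) : x * y ∈ idealPow (I : Set A) (i + j) := by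
  induction i generalizing x with
  | zero => simpa using idealPow_mul_mem_left hy x
  | succ i ih =>
    rw [idealPow_succ] at hx
    rw [Nat.succ_add, idealPow_succ]
    refine (AddSubgroup.closure_le (K := (AddSubgroup.closure _).comap
      (AddMonoidHom.mulRight y))).2 ?_ hx
    rintro _ ⟨a, ha, b, hb, rfl⟩
    exact AddSubgroup.subset_closure ⟨a, ha, b * y, ih hb, mul_assoc a b y⟩

variable (I) in
lemma idealPow_antitone : Antitone (idealPow (I : Set A)) := by
  refine antitone_nat_of_succ_le fun n => ?_
  rw [idealPow_succ, AddSubgroup.closure_le]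
  rintro _ ⟨a, -, b, hb, rfl⟩
  exact idealPow_mul_mem_left hb a

end IdealPow

namespace Polynomial

section CoeffsIn

variable {A : Type*} [Ring A]

def coeffsIn (S : AddSubgroup A) : AddSubgroup A[X] where
  carrier := {p | ∀ n, p.coeff n ∈ S}
  add_mem' hp hq n := by rw [coeff_add]; exact add_mem (hp n) (hq n)
  zero_mem' n := by rw [coeff_zero]; exact zero_mem S
  neg_mem' hp n := by rw [coeff_neg]; exact neg_mem (hp n)

lemma coeffsIn_mono {S T : AddSubgroup A} (h : S ≤ T) : coeffsIn S ≤ coeffsIn T :=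
  fun _ hp n => h (hp n)

lemma C_mem_coeffsIn {S : AddSubgroup A} {a : A} (ha : a ∈ S) : C a ∈ coeffsIn S := by
  intro n
  rw [coeff_C]
  split_ifs
  exacts [ha, zero_mem S]

lemma C_mul_sub_mul_C_mem_coeffsIn {S : AddSubgroup A} {δ : A} (hδ : ∀ a, δ * a - a * δ ∈ S)
    (p : A[X]) : C δ * p - p * C δ ∈ coeffsIn S := fun n => by
  rw [coeff_sub, coeff_C_mul, coeff_mul_C]
  exact hδ _

lemma mem_coeffsIn_idealPow_zero (m : Set A) (p : A[X]) : p ∈ coeffsIn (idealPow m 0) :=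
  fun _ => AddSubgroup.mem_top _

lemma mem_coeffsIn_idealPow_one_of_map_eq_zero {K : Type*} [Ring K] {π : A →+* K} {p : A[X]}
    (hp : p.map π = 0) : p ∈ coeffsIn (idealPow (RingHom.ker π : Set A) 1) := fun n =>
  mem_idealPow_one (by rw [SetLike.mem_coe, RingHom.mem_ker, ← coeff_map, hp, coeff_zero])

lemma mul_mem_coeffsIn_idealPow {I : Ideal A} {i j : ℕ} {p q : A[X]}
    (hp : p ∈ coeffsIn (idealPow (I : Set A) i)) (hq : q ∈ coeffsIn (idealPow (I : Set A) j)) :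
    p * q ∈ coeffsIn (idealPow (I : Set A) (i + j)) := fun n => by
  rw [coeff_mul]
  exact sum_mem fun x _ => idealPow_mul_mem (hp x.1) (hq x.2)

end CoeffsIn

lemma exists_mul_add_mul_eq_of_degree_lt {R : Type*} [CommRing R] [Nontrivial R]
    {f₁ f₂ p : R[X]} (hf₁ : f₁.Monic) (hf₂ : f₂.Monic) (hcop : IsCoprime f₁ f₂)
    (hp : p.degree < ↑(f₁.natDegree + f₂.natDegree)) :
    ∃ a₁ a₂ : R[X], a₁ * f₂ + a₂ * f₁ = p ∧
      a₁.degree < f₁.natDegree ∧ a₂.degree < f₂.natDegree := by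
  obtain ⟨u, v, huv⟩ := hcop
  set a₁ := p * v %ₘ f₁
  set a₂ := p * u + (p * v /ₘ f₁) * f₂
  have hsum : a₁ * f₂ + a₂ * f₁ = p := by
    linear_combination f₂ * modByMonic_add_div (p * v) f₁ + p * huv
  have ha₁ : a₁.degree < f₁.natDegree :=
    degree_eq_natDegree hf₁.ne_zero ▸ degree_modByMonic_lt _ hf₁
  refine ⟨a₁, a₂, hsum, ha₁, ?_⟩
  have h : (a₂ * f₁).degree < ↑(f₁.natDegree + f₂.natDegree) := by
    rw [eq_sub_of_add_eq' hsum]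
    refine (degree_sub_le _ _).trans_lt (max_lt hp ?_)
    rw [hf₂.degree_mul, degree_eq_natDegree hf₂.ne_zero, Nat.cast_add]
    exact WithBot.add_lt_add_right (WithBot.natCast_ne_bot _) ha₁
  rw [hf₁.degree_mul, degree_eq_natDegree hf₁.ne_zero, add_comm, Nat.cast_add] at h
  exact (WithBot.add_lt_add_iff_left (WithBot.natCast_ne_bot _)).1 h

variable {A : Type*} [Ring A]

lemma degree_sub_lt_of_map_eq {K : Type*} [Ring K] [Nontrivial K] {π : A →+* K} {f g : A[X]}
    (hf : f.Monic) (hg : g.Monic) (h : f.map π = g.map π) : (f - g).degree < f.degree := by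
  have : Nontrivial A := π.domain_nontrivial
  refine degree_sub_lt_left ?_ hf.ne_zero (by rw [hf.leadingCoeff, hg.leadingCoeff])
  rw [← hf.degree_map π, ← hg.degree_map π, h]

def linearlyCorrectable (I : Ideal A) (r : ℕ) (F₁ F₂ : A[X]) (n₁ n₂ : ℕ) :
    AddSubmonoid A[X] where
  carrier := {Δ | ∃ G₁ ∈ coeffsIn (idealPow (I : Set A) r) ⊓ (degreeLT A n₁).toAddSubgroup,
    ∃ G₂ ∈ coeffsIn (idealPow (I : Set A) r) ⊓ (degreeLT A n₂).toAddSubgroup,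
      Δ - (F₁ * G₂ + G₁ * F₂) ∈ coeffsIn (idealPow (I : Set A) (r + 1))}
  zero_mem' := ⟨0, zero_mem _, 0, zero_mem _, by simp⟩
  add_mem' := by
    rintro Δ Δ' ⟨G₁, hG₁, G₂, hG₂, hΔ⟩ ⟨G₁', hG₁', G₂', hG₂', hΔ'⟩
    refine ⟨G₁ + G₁', add_mem hG₁ hG₁', G₂ + G₂', add_mem hG₂ hG₂', ?_⟩
    convert add_mem hΔ hΔ' using 1
    noncomm_ring

variable {R : Type*} [CommRing R] [Nontrivial R] {π : A →+* R} {f₁ f₂ : R[X]} {F₁ F₂ : A[X]}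
  {r : ℕ}

lemma monomial_mem_linearlyCorrectable (hπ : Function.Surjective π) (hf₁ : f₁.Monic)
    (hf₂ : f₂.Monic) (hcop : IsCoprime f₁ f₂) (hF₁ : F₁.map π = f₁) (hF₂ : F₂.map π = f₂)
    {k : ℕ} (hk : k < f₁.natDegree + f₂.natDegree) {δ : A}
    (hδ : δ ∈ idealPow (RingHom.ker π : Set A) r)
    (hδcomm : ∀ a, δ * a - a * δ ∈ idealPow (RingHom.ker π : Set A) (r + 1)) :
    monomial k δ ∈ linearlyCorrectable (RingHom.ker π) r F₁ F₂ f₁.natDegree f₂.natDegree := by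
  obtain ⟨a₁, a₂, hsum, ha₁, ha₂⟩ := exists_mul_add_mul_eq_of_degree_lt hf₁ hf₂ hcop
    (p := X ^ k) (by rw [degree_X_pow]; exact_mod_cast hk)
  obtain ⟨B₁, hB₁, hB₁deg⟩ := exists_degree_eq_of_mem_lifts (map_surjective π hπ a₁)
  obtain ⟨B₂, hB₂, hB₂deg⟩ := exists_degree_eq_of_mem_lifts (map_surjective π hπ a₂)
  have hB : X ^ k - (F₁ * B₂ + B₁ * F₂) ∈ coeffsIn (idealPow (RingHom.ker π : Set A) 1) :=
    mem_coeffsIn_idealPow_one_of_map_eq_zero (by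
      rw [Polynomial.map_sub, Polynomial.map_add, Polynomial.map_mul, Polynomial.map_mul,
        Polynomial.map_pow, map_X, hF₁, hF₂, hB₁, hB₂, ← hsum]
      ring)
  have hCδ : C δ ∈ coeffsIn (idealPow (RingHom.ker π : Set A) r) := C_mem_coeffsIn hδ
  refine ⟨C δ * B₁, ⟨mul_mem_coeffsIn_idealPow hCδ (mem_coeffsIn_idealPow_zero _ B₁), ?_⟩,
    C δ * B₂, ⟨mul_mem_coeffsIn_idealPow hCδ (mem_coeffsIn_idealPow_zero _ B₂), ?_⟩, ?_⟩
  · show C δ * B₁ ∈ degreeLT A f₁.natDegree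
    rw [← smul_eq_C_mul]
    exact Submodule.smul_mem _ δ (mem_degreeLT.2 (hB₁deg ▸ ha₁))
  · show C δ * B₂ ∈ degreeLT A f₂.natDegree
    rw [← smul_eq_C_mul]
    exact Submodule.smul_mem _ δ (mem_degreeLT.2 (hB₂deg ▸ ha₂))
  · rw [← C_mul_X_pow_eq_monomial, show C δ * X ^ k - (F₁ * (C δ * B₂) + C δ * B₁ * F₂) =
      C δ * (X ^ k - (F₁ * B₂ + B₁ * F₂)) + (C δ * F₁ - F₁ * C δ) * B₂ by noncomm_ring]
    exact add_mem (mul_mem_coeffsIn_idealPow hCδ hB) (mul_mem_coeffsIn_idealPow (j := 0)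
      (C_mul_sub_mul_C_mem_coeffsIn hδcomm F₁) (mem_coeffsIn_idealPow_zero _ B₂))

lemma mem_linearlyCorrectable_of_degree_lt (hπ : Function.Surjective π) (hf₁ : f₁.Monic)
    (hf₂ : f₂.Monic) (hcop : IsCoprime f₁ f₂) (hF₁ : F₁.map π = f₁) (hF₂ : F₂.map π = f₂)
    (hcomm : ∀ δ ∈ idealPow (RingHom.ker π : Set A) r,
      ∀ a, δ * a - a * δ ∈ idealPow (RingHom.ker π : Set A) (r + 1))
    {Δ : A[X]} (hΔ : Δ ∈ coeffsIn (idealPow (RingHom.ker π : Set A) r))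
    (hdeg : Δ.degree < ↑(f₁.natDegree + f₂.natDegree)) :
    Δ ∈ linearlyCorrectable (RingHom.ker π) r F₁ F₂ f₁.natDegree f₂.natDegree := by
  rw [Δ.as_sum_support]
  refine sum_mem fun k hk => monomial_mem_linearlyCorrectable hπ hf₁ hf₂ hcop hF₁ hF₂ ?_
    (hΔ k) (hcomm _ (hΔ k))
  exact_mod_cast (le_degree_of_ne_zero (mem_support_iff.1 hk)).trans_lt hdeg

end Polynomial

/-- Let `A` be a (possibly non-commutative) almost commutative local ring: the non-invertible
elements form a two-sided ideal `m`, encoded by a surjective ring homomorphism `π : A → K` onto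
the residue field `K` with kernel the non-units, and the associated graded ring
`gr(A) = ⊕ mⁱ/mⁱ⁺¹` is commutative (`a * b - b * a ∈ m^(i+j+1)` for `a ∈ mⁱ`, `b ∈ mʲ`).
Let `f ∈ A[x]` be monic with `f̄ = f₁ * f₂` for relatively prime monic polynomials
`f₁, f₂ ∈ K[x]`, and let `r ≥ 1`.  Suppose `F₁, F₂ ∈ A[x]` are monic with `F̄₁ = f₁`,
`F̄₂ = f₂`, and `f − F₁F₂ ∈ mʳ[x]` (all coefficients lie in `mʳ`).  Then there exist
`G₁, G₂ ∈ mʳ[x]` with `deg G₁ < deg f₁` and `deg G₂ < deg f₂` such that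
`f − (F₁ + G₁)(F₂ + G₂) ∈ m^(r+1)[x]`. -/
theorem henselian_inductive_step
    {A : Type*} [Ring A] {K : Type*} [Field K]
    (π : A →+* K) (hπsurj : Function.Surjective π)
    (hπker : ∀ a : A, π a = 0 ↔ ¬ IsUnit a)
    -- almost commutative
    (hac : ∀ i j : ℕ, ∀ a ∈ idealPow {a : A | ¬ IsUnit a} i,
      ∀ b ∈ idealPow {a : A | ¬ IsUnit a} j,
        a * b - b * a ∈ idealPow {a : A | ¬ IsUnit a} (i + j + 1))
    (f : A[X]) (hf : f.Monic) (f₁ f₂ : K[X])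
    (hf₁ : f₁.Monic) (hf₂ : f₂.Monic) (hcop : IsCoprime f₁ f₂)
    (hred : f.map π = f₁ * f₂)
    (r : ℕ) (hr : 1 ≤ r)
    (F₁ F₂ : A[X]) (hF₁ : F₁.Monic) (hF₂ : F₂.Monic)
    (hF₁red : F₁.map π = f₁) (hF₂red : F₂.map π = f₂)
    (happrox : ∀ n : ℕ, (f - F₁ * F₂).coeff n ∈ idealPow {a : A | ¬ IsUnit a} r) :
    ∃ G₁ G₂ : A[X],
      (∀ n : ℕ, G₁.coeff n ∈ idealPow {a : A | ¬ IsUnit a} r) ∧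
      (∀ n : ℕ, G₂.coeff n ∈ idealPow {a : A | ¬ IsUnit a} r) ∧
      G₁.degree < f₁.degree ∧ G₂.degree < f₂.degree ∧
      ∀ n : ℕ, (f - (F₁ + G₁) * (F₂ + G₂)).coeff n ∈
        idealPow {a : A | ¬ IsUnit a} (r + 1) := by
  have hm : {a : A | ¬ IsUnit a} = (RingHom.ker π : Set A) := Set.ext fun a => (hπker a).symm
  rw [hm] at hac happrox ⊢
  have hdeg : (f - F₁ * F₂).degree < ↑(f₁.natDegree + f₂.natDegree) := by
    have hfdeg : f.degree = ↑(f₁.natDegree + f₂.natDegree) := by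
      rw [← hf.degree_map π, hred, degree_mul, degree_eq_natDegree hf₁.ne_zero,
        degree_eq_natDegree hf₂.ne_zero, Nat.cast_add]
    exact hfdeg ▸ degree_sub_lt_of_map_eq hf (hF₁.mul hF₂) (by
      rw [hred, Polynomial.map_mul, hF₁red, hF₂red])
  obtain ⟨G₁, ⟨hG₁, hG₁deg⟩, G₂, ⟨hG₂, hG₂deg⟩, hlin⟩ :=
    mem_linearlyCorrectable_of_degree_lt hπsurj hf₁ hf₂ hcop hF₁red hF₂red
      (fun δ hδ a => hac r 0 δ hδ a (AddSubgroup.mem_top a)) happrox hdeg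
  refine ⟨G₁, G₂, hG₁, hG₂, ?_, ?_, ?_⟩
  · rw [degree_eq_natDegree hf₁.ne_zero]
    exact mem_degreeLT.1 hG₁deg
  · rw [degree_eq_natDegree hf₂.ne_zero]
    exact mem_degreeLT.1 hG₂deg
  · have hG₁G₂ : G₁ * G₂ ∈ coeffsIn (idealPow (RingHom.ker π : Set A) (r + 1)) :=
      coeffsIn_mono (idealPow_antitone _ (by omega)) (mul_mem_coeffsIn_idealPow hG₁ hG₂)
    rw [show f - (F₁ + G₁) * (F₂ + G₂) = f - F₁ * F₂ - (F₁ * G₂ + G₁ * F₂) - G₁ * G₂ by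
      noncomm_ring]
    exact sub_mem hlin hG₁G₂
end

section
/- (Krull–Schmidt–Azumaya) Let A be a ring and M a left A-module admitting decompositions into submodules M = M₁ ⊕ ⋯ ⊕ M_r ≅ N₁ ⊕ ⋯ ⊕ N_s, where each Mᵢ is indecomposable and each Nⱼ is strongly indecomposable. Then r = s and, after a reindexing, Mᵢ ≅ Nᵢ for every i. -/
/-!
Azumaya's exchange argument, by induction on the number of summands. Fix a summand `N₀ = N_{j₀}`
and let `π` be the projection onto `N₀` along the other `Nⱼ`. The endomorphisms `π ∘ projᵢ` of
`N₀` sum to the identity, so, `End N₀` being local, one of them is invertible. Then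
`projᵢ : N₀ → Mᵢ` is split injective, hence an isomorphism since `Mᵢ` is indecomposable, and
consequently `N₀` is also a complement of `⨁_{k ≠ i} M_k`. That module and `⨁_{j ≠ j₀} Nⱼ` are
both isomorphic to `M ⧸ N₀`, which gives two decompositions of one module with one summand fewer
on each side.
-/

open DirectSum LinearMap

structure Module.IsIndecomposable (R N : Type*) [Ring R] [AddCommGroup N] [Module R N] :
    Prop where
  nontrivial : Nontrivial N
  eq_bot_or_eq_bot (P Q : Submodule R N) : IsCompl P Q → P = ⊥ ∨ Q = ⊥

section

variable {R M N P : Type*} [Ring R] [AddCommGroup M] [Module R M]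
  [AddCommGroup N] [Module R N] [AddCommGroup P] [Module R P]

theorem Module.IsIndecomposable.of_linearEquiv (e : N ≃ₗ[R] P) (h : IsIndecomposable R N) :
    IsIndecomposable R P where
  nontrivial := have := h.nontrivial; e.symm.toEquiv.nontrivial
  eq_bot_or_eq_bot P₁ Q₁ hPQ := by
    let o := Submodule.orderIsoMapComap e.symm
    simpa using h.eq_bot_or_eq_bot (o P₁) (o Q₁) (o.isCompl hPQ)

theorem Module.End.isLocalRing_of_linearEquiv (e : N ≃ₗ[R] P) [IsLocalRing (Module.End R N)] :
    IsLocalRing (Module.End R P) :=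
  (e.symm.conjRingEquiv : Module.End R P →+* Module.End R N).domain_isLocalRing

theorem LinearMap.isCompl_range_ker_of_comp_eq_id {f : N →ₗ[R] P} {g : P →ₗ[R] N}
    (hgf : g ∘ₗ f = LinearMap.id) : IsCompl (range f) (ker g) := by
  have hidem : IsIdempotentElem (f ∘ₗ g) := by
    rw [IsIdempotentElem, Module.End.mul_eq_comp, comp_assoc, ← comp_assoc g, hgf, id_comp]
  have hrange : range (f ∘ₗ g) = range f :=
    range_comp_of_range_eq_top f (range_eq_top.mpr (surjective_of_comp_eq_id f g hgf))
  have hker : ker (f ∘ₗ g) = ker g :=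
    ker_comp_of_ker_eq_bot g (ker_eq_bot.mpr (injective_of_comp_eq_id f g hgf))
  simpa only [hrange, hker] using hidem.isCompl

theorem Module.IsIndecomposable.bijective_of_isUnit_comp [Nontrivial N]
    (hP : IsIndecomposable R P) {f : N →ₗ[R] P} {g : P →ₗ[R] N}
    (hgf : IsUnit (g ∘ₗ f : Module.End R N)) : Function.Bijective f := by
  obtain ⟨u, hu⟩ := hgf
  set l : P →ₗ[R] N := ((u⁻¹ : (Module.End R N)ˣ) : Module.End R N) ∘ₗ g
  have hleft : l ∘ₗ f = LinearMap.id := by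
    rw [comp_assoc, ← hu]
    exact u.inv_mul
  have hinj : Function.Injective f := injective_of_comp_eq_id f l hleft
  have hcompl := isCompl_range_ker_of_comp_eq_id hleft
  refine ⟨hinj, ?_⟩
  rcases hP.eq_bot_or_eq_bot _ _ hcompl with h | h
  · obtain ⟨x, hx⟩ := exists_ne (0 : N)
    exact absurd (hinj ((range_eq_bot.mp h).symm ▸ (map_zero f).symm : f x = f 0)) hx
  · exact range_eq_top.mp (eq_top_of_isCompl_bot (h ▸ hcompl))

theorem Submodule.isCompl_ker_of_bijective_comp_subtype {N₀ : Submodule R M} {f : M →ₗ[R] P}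
    (hf : Function.Bijective (f ∘ₗ N₀.subtype)) : IsCompl N₀ (ker f) := by
  let g := (LinearEquiv.ofBijective _ hf).symm.toLinearMap
  have h := LinearMap.isCompl_of_proj (f := g ∘ₗ f) fun x =>
    (LinearEquiv.ofBijective _ hf).symm_apply_apply x
  rwa [LinearMap.ker_comp, LinearEquiv.ker, Submodule.comap_bot] at h

theorem Equiv.exists_extend_compl_singleton {ι κ : Type*} [DecidableEq ι] [DecidableEq κ]
    {i : ι} {j : κ} (σ' : ({i}ᶜ : Set ι) ≃ ({j}ᶜ : Set κ)) :
    ∃ σ : ι ≃ κ, σ i = j ∧ ∀ k : ({i}ᶜ : Set ι), σ k = σ' k := by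
  refine ⟨(Equiv.Set.sumCompl {i}).symm.trans
    ((Equiv.sumCongr (Equiv.ofUnique _ _) σ').trans (Equiv.Set.sumCompl {j})), ?_, fun k => ?_⟩
  · simp [Equiv.Set.sumCompl_symm_apply_of_mem (Set.mem_singleton i)]
  · simp [Equiv.Set.sumCompl_symm_apply_of_notMem k.2]

namespace DirectSum.IsInternal

variable {ι : Type*} [DecidableEq ι] {A : ι → Submodule R M}

theorem map_linearEquiv (h : IsInternal A) (e : M ≃ₗ[R] N) :
    IsInternal fun i => (A i).map (e : M →ₗ[R] N) := by
  refine isInternal_submodule_of_iSupIndep_of_iSup_eq_top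
    ((iSupIndep_map_orderIso_iff (Submodule.orderIsoMapComap e)).mpr h.submodule_iSupIndep) ?_
  rw [← Submodule.map_iSup, h.submodule_iSup_eq_top, Submodule.map_top, LinearEquiv.range]

theorem isCompl_biSup_compl (h : IsInternal A) (i : ι) :
    IsCompl (A i) (⨆ j ∈ ({i}ᶜ : Set ι), A j) := by
  refine ⟨h.submodule_iSupIndep i, codisjoint_iff.mpr ?_⟩
  rw [← h.submodule_iSup_eq_top, iSup_split_single A i]
  rfl

noncomputable def proj (h : IsInternal A) (i : ι) : M →ₗ[R] A i :=
  (A i).projectionOnto _ (h.isCompl_biSup_compl i)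

theorem proj_apply_of_mem (h : IsInternal A) {i : ι} {x : M} (hx : x ∈ A i) :
    h.proj i x = ⟨x, hx⟩ :=
  Submodule.projectionOnto_apply_left _ ⟨x, hx⟩

theorem proj_apply_of_mem_ne (h : IsInternal A) {i j : ι} (hij : i ≠ j) {x : M} (hx : x ∈ A i) :
    h.proj j x = 0 :=
  (Submodule.projectionOnto_apply_eq_zero_iff _).mpr
    (le_biSup A (Set.mem_compl_singleton_iff.mpr hij) hx)

theorem ker_proj (h : IsInternal A) (i : ι) : ker (h.proj i) = ⨆ j ∈ ({i}ᶜ : Set ι), A j :=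
  Submodule.ker_projectionOnto _

theorem sum_proj [Fintype ι] (h : IsInternal A) (x : M) : ∑ i, (h.proj i x : M) = x := by
  have hx : x ∈ ⨆ i, A i := h.submodule_iSup_eq_top ▸ Submodule.mem_top
  induction hx using Submodule.iSup_induction' with
  | mem j y hy =>
    rw [Finset.sum_eq_single j, h.proj_apply_of_mem hy]
    · intro i _ hij
      rw [h.proj_apply_of_mem_ne (Ne.symm hij) hy, Submodule.coe_zero]
    · exact fun hj => absurd (Finset.mem_univ j) hj
  | zero => simp
  | add y z _ _ hy hz => simp only [map_add, Submodule.coe_add, Finset.sum_add_distrib, hy, hz]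

theorem exists_isInternal_of_isCompl (h : IsInternal A) {i : ι} {K : Submodule R M}
    (hK : IsCompl (A i) K) :
    ∃ A' : ({i}ᶜ : Set ι) → Submodule R K, IsInternal A' ∧ ∀ k, Nonempty (A' k ≃ₗ[R] A k) := by
  set L := ⨆ j ∈ ({i}ᶜ : Set ι), A j
  let e : L ≃ₗ[R] K := (Submodule.quotientEquivOfIsCompl _ _ (h.isCompl_biSup_compl i)).symm ≪≫ₗ
    Submodule.quotientEquivOfIsCompl _ _ hK
  refine ⟨fun k => ((A k).comap L.subtype).map (e : L →ₗ[R] K), ?_, fun k =>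
    ⟨(e.submoduleMap _).symm ≪≫ₗ Submodule.comapSubtypeEquivOfLe (le_biSup A k.2)⟩⟩
  exact (isInternal_biSup_submodule_of_iSupIndep _
    (h.submodule_iSupIndep.comp Subtype.val_injective)).map_linearEquiv e

theorem exists_linearEquiv_isCompl_biSup_compl [Fintype ι] (h : IsInternal A)
    (hind : ∀ i, Module.IsIndecomposable R (A i)) {N₀ L : Submodule R M}
    [IsLocalRing (Module.End R N₀)] (hN₀ : IsCompl N₀ L) :
    ∃ i, Nonempty (A i ≃ₗ[R] N₀) ∧ IsCompl N₀ (⨆ j ∈ ({i}ᶜ : Set ι), A j) := by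
  let u i : N₀ →ₗ[R] A i := h.proj i ∘ₗ N₀.subtype
  let v i : A i →ₗ[R] N₀ := N₀.projectionOnto L hN₀ ∘ₗ (A i).subtype
  have hsum : ∑ i, (v i ∘ₗ u i : Module.End R N₀) = 1 := by
    refine LinearMap.ext fun x => ?_
    simp only [u, v, LinearMap.sum_apply, comp_apply, Submodule.subtype_apply]
    rw [← map_sum, h.sum_proj, Submodule.projectionOnto_apply_left]
    rfl
  obtain ⟨i, -, hi⟩ := IsLocalRing.exists_of_isUnit_sum (hsum ▸ isUnit_one)
  have : Nontrivial N₀ := by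
    by_contra hN
    rw [not_nontrivial_iff_subsingleton] at hN
    exact not_subsingleton (Module.End R N₀) inferInstance
  have hbij := (hind i).bijective_of_isUnit_comp hi
  refine ⟨i, ⟨(LinearEquiv.ofBijective _ hbij).symm⟩, ?_⟩
  rw [← h.ker_proj i]
  exact Submodule.isCompl_ker_of_bijective_comp_subtype hbij

theorem exists_equiv_forall_nonempty_linearEquiv {κ : Type*} [DecidableEq κ]
    [Finite ι] [Finite κ] {B : κ → Submodule R M} (hA : IsInternal A) (hB : IsInternal B)
    (hAind : ∀ i, Module.IsIndecomposable R (A i))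
    (hBloc : ∀ j, IsLocalRing (Module.End R (B j))) :
    ∃ σ : ι ≃ κ, ∀ i, Nonempty (A i ≃ₗ[R] B (σ i)) := by
  obtain ⟨n, hn⟩ : ∃ n, Nat.card κ = n := ⟨_, rfl⟩
  induction n generalizing M ι κ with
  | zero =>
    have : IsEmpty κ := Finite.card_eq_zero_iff.mp hn
    have : IsEmpty ι := ⟨fun i => by
      refine Submodule.nontrivial_iff_ne_bot.mp (hAind i).nontrivial (eq_bot_iff.mpr ?_)
      rw [← iSup_of_empty B, hB.submodule_iSup_eq_top]
      exact le_top⟩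
    exact ⟨Equiv.equivOfIsEmpty ι κ, isEmptyElim⟩
  | succ n ih =>
    obtain ⟨j₀⟩ : Nonempty κ := Finite.card_pos_iff.mp (hn ▸ n.succ_pos)
    have := Fintype.ofFinite ι
    have := hBloc j₀
    obtain ⟨i, ⟨e₀⟩, hK⟩ :=
      hA.exists_linearEquiv_isCompl_biSup_compl hAind (hB.isCompl_biSup_compl j₀)
    obtain ⟨A', hA', eA⟩ := hA.exists_isInternal_of_isCompl (hA.isCompl_biSup_compl i)
    obtain ⟨B', hB', eB⟩ := hB.exists_isInternal_of_isCompl hK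
    have hcard : Nat.card ({j₀}ᶜ : Set κ) = n := by
      rw [Nat.card_coe_set_eq, Set.ncard_compl, Set.ncard_singleton, hn, Nat.add_sub_cancel]
    obtain ⟨σ', hσ'⟩ := ih hA' hB'
      (fun k => (hAind k).of_linearEquiv (eA k).some.symm)
      (fun j => have := hBloc j; Module.End.isLocalRing_of_linearEquiv (eB j).some.symm) hcard
    obtain ⟨σ, hσi, hσ⟩ := Equiv.exists_extend_compl_singleton σ'
    refine ⟨σ, fun k => ?_⟩
    by_cases hk : k = i
    · exact hk ▸ hσi ▸ ⟨e₀⟩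
    · rw [hσ ⟨k, hk⟩]
      exact ⟨(eA ⟨k, hk⟩).some.symm ≪≫ₗ (hσ' ⟨k, hk⟩).some ≪≫ₗ (eB (σ' ⟨k, hk⟩)).some⟩

end DirectSum.IsInternal

end

theorem krull_schmidt_azumaya_general
    {A : Type*} [Ring A] {M : Type*} [AddCommGroup M] [Module A M]
    (r s : ℕ) (Mf : Fin r → Submodule A M) (Nf : Fin s → Submodule A M)
    (hM : DirectSum.IsInternal Mf) (hN : DirectSum.IsInternal Nf)
    -- each `Mᵢ` is indecomposable
    (hMne : ∀ i, Mf i ≠ ⊥)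
    (hMind : ∀ i, ∀ P Q : Submodule A ↥(Mf i), IsCompl P Q → P = ⊥ ∨ Q = ⊥)
    -- each `Nⱼ` is strongly indecomposable: `End_A (Nⱼ)` is a local ring
    (hNzero : ∀ j, ¬ IsUnit (0 : Module.End A ↥(Nf j)))
    (hNadd : ∀ j, ∀ f g : Module.End A ↥(Nf j),
      ¬ IsUnit f → ¬ IsUnit g → ¬ IsUnit (f + g)) :
    r = s ∧ ∃ σ : Fin r ≃ Fin s, ∀ i : Fin r, Nonempty (↥(Mf i) ≃ₗ[A] ↥(Nf (σ i))) := by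
  have hMind' i : Module.IsIndecomposable A (Mf i) :=
    ⟨Submodule.nontrivial_iff_ne_bot.mpr (hMne i), hMind i⟩
  have hNloc j : IsLocalRing (Module.End A (Nf j)) :=
    have : Nontrivial (Module.End A (Nf j)) :=
      nontrivial_of_ne 0 1 fun h => hNzero j (h ▸ isUnit_one)
    IsLocalRing.of_nonunits_add (hNadd j)
  obtain ⟨σ, hσ⟩ := hM.exists_equiv_forall_nonempty_linearEquiv hN hMind' hNloc
  exact ⟨by simpa using Fintype.card_congr σ, σ, hσ⟩

/-- (Krull–Schmidt–Azumaya)  Let `A` be a ring and `M` a left `A`-module admitting two internal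
direct sum decompositions `M = M₁ ⊕ ⋯ ⊕ M_r = N₁ ⊕ ⋯ ⊕ N_s` into submodules, where each `Mᵢ`
is indecomposable (nonzero, and not the internal direct sum of two nonzero submodules, i.e. it
admits no complemented pair of submodules other than trivial ones) and each `Nⱼ` is strongly
indecomposable (its endomorphism ring is local: the non-invertible endomorphisms form a
two-sided ideal — they contain `0`, are closed under addition, and under composition with
arbitrary endomorphisms on either side).  Then `r = s` and, after a reindexing, `Mᵢ ≅ Nᵢ` for
every `i`. -/
theorem krull_schmidt_azumaya
    {A : Type*} [Ring A] {M : Type*} [AddCommGroup M] [Module A M]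
    (r s : ℕ) (Mf : Fin r → Submodule A M) (Nf : Fin s → Submodule A M)
    (hM : DirectSum.IsInternal Mf) (hN : DirectSum.IsInternal Nf)
    -- each `Mᵢ` is indecomposable
    (hMne : ∀ i, Mf i ≠ ⊥)
    (hMind : ∀ i, ∀ P Q : Submodule A ↥(Mf i), IsCompl P Q → P = ⊥ ∨ Q = ⊥)
    -- each `Nⱼ` is strongly indecomposable: `End_A (Nⱼ)` is a local ring
    (hNzero : ∀ j, ¬ IsUnit (0 : Module.End A ↥(Nf j)))
    (hNadd : ∀ j, ∀ f g : Module.End A ↥(Nf j),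
      ¬ IsUnit f → ¬ IsUnit g → ¬ IsUnit (f + g))
    (hNmul_left : ∀ j, ∀ f g : Module.End A ↥(Nf j), ¬ IsUnit f → ¬ IsUnit (g * f))
    (hNmul_right : ∀ j, ∀ f g : Module.End A ↥(Nf j), ¬ IsUnit f → ¬ IsUnit (f * g)) :
    r = s ∧ ∃ σ : Fin r ≃ Fin s, ∀ i : Fin r, Nonempty (↥(Mf i) ≃ₗ[A] ↥(Nf (σ i))) :=
  krull_schmidt_azumaya_general r s Mf Nf hM hN hMne hMind hNzero hNadd
end
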